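/- arXiv:math/0609763 — 7 statements merged into one kernel-verified Lean document; each statement's English description precedes it below -/
import Mathlib

section
/- Let F be a real quadratic field with ring of integers 𝒪_F. The map φ sending a point (α : β) of the projective line ℙ¹(F) (represented by a pair (α,β) ∈ F² \ {(0,0)}, up to scaling by F^×) to the class of the fractional ideal α𝒪_F + β𝒪_F in the ideal class group Cl(F) is well defined and induces a bijection from the set of orbits SL₂(𝒪_F)\ℙ¹(F) onto Cl(F). Explicitly: φ((aα+bβ : cα+dβ)) = φ((α:β)) for every matrix (a b; c d) ∈ SL₂(𝒪_F); every ideal class equals φ((α:β)) for some (α:β); and if φ((α:β)) = φ((γ:δ)) then there exists g ∈ SL₂(𝒪_F) carrying (α:β) to (γ:δ). -/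
open scoped nonZeroDivisors Classical

/-- The class in the ideal class group of the fractional ideal `α𝒪_F + β𝒪_F`
generated by a pair `(α, β) ≠ (0, 0)` of elements of `F` (junk value `1` for `(0,0)`). -/
noncomputable def pairIdealClass (F : Type*) [Field F] [NumberField F] (α β : F) :
    ClassGroup (NumberField.RingOfIntegers F) :=
  if h : α = 0 ∧ β = 0 then 1
  else
    ClassGroup.mk F
      (Units.mk0
        (FractionalIdeal.spanSingleton (NumberField.RingOfIntegers F)⁰ α +
          FractionalIdeal.spanSingleton (NumberField.RingOfIntegers F)⁰ β)
        (by
          intro hzero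
          apply h
          constructor
          · have hα : α ∈ FractionalIdeal.spanSingleton (NumberField.RingOfIntegers F)⁰ α +
                FractionalIdeal.spanSingleton (NumberField.RingOfIntegers F)⁰ β :=
              (FractionalIdeal.mem_add _ _ _).mpr
                ⟨α, FractionalIdeal.mem_spanSingleton_self _ α, 0, FractionalIdeal.zero_mem _, add_zero α⟩
            rw [hzero] at hα
            simpa using hα
          · have hβ : β ∈ FractionalIdeal.spanSingleton (NumberField.RingOfIntegers F)⁰ α +
                FractionalIdeal.spanSingleton (NumberField.RingOfIntegers F)⁰ β :=
              (FractionalIdeal.mem_add _ _ _).mpr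
                ⟨0, FractionalIdeal.zero_mem _, β, FractionalIdeal.mem_spanSingleton_self _ β, zero_add β⟩
            rw [hzero] at hβ
            simpa using hβ))

/-- The image in `F` of an entry of a matrix in `SL₂(𝒪_F)`. -/
noncomputable def slEntry (F : Type*) [Field F] [NumberField F]
    (g : Matrix.SpecialLinearGroup (Fin 2) (NumberField.RingOfIntegers F)) (i j : Fin 2) : F :=
  algebraMap (NumberField.RingOfIntegers F) F (g.1 i j)

/-! The class of `αR + βR` is unchanged by scaling and by `SL₂(R)`, since an invertible matrix
carries a generating pair of an ideal to another generating pair. In a Dedekind domain every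
fractional ideal is generated by two elements, which gives surjectivity. For injectivity, rescale
so that both pairs generate the same invertible ideal `I`; Bézout relations `αp + βq = 1 = γs + δr`
with `p, q, s, r ∈ I⁻¹` then produce an explicit matrix of determinant one over `R` carrying one
pair to the other. -/

open FractionalIdeal

section PairSpan

variable {R K : Type*} [CommRing R] [CommRing K] [Algebra R K] [IsFractionRing R K]

variable (R) in
noncomputable def pairSpan (α β : K) : FractionalIdeal R⁰ K :=
  spanSingleton R⁰ α + spanSingleton R⁰ β

theorem pairSpan_le_iff {α β : K} {I : FractionalIdeal R⁰ K} :
    pairSpan R α β ≤ I ↔ α ∈ I ∧ β ∈ I := by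
  rw [pairSpan, ← sup_eq_add, sup_le_iff, spanSingleton_le_iff_mem, spanSingleton_le_iff_mem]

theorem left_mem_pairSpan (α β : K) : α ∈ pairSpan R α β :=
  (pairSpan_le_iff.mp le_rfl).1

theorem right_mem_pairSpan (α β : K) : β ∈ pairSpan R α β :=
  (pairSpan_le_iff.mp le_rfl).2

theorem pairSpan_eq_zero_iff {α β : K} : pairSpan R α β = 0 ↔ α = 0 ∧ β = 0 := by
  refine ⟨fun h ↦ ?_, fun ⟨hα, hβ⟩ ↦ by simp [pairSpan, hα, hβ]⟩
  simpa [h] using And.intro (left_mem_pairSpan (R := R) α β) (right_mem_pairSpan (R := R) α β)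

theorem pairSpan_mul_left (r α β : K) :
    pairSpan R (r * α) (r * β) = spanSingleton R⁰ r * pairSpan R α β := by
  rw [pairSpan, pairSpan, mul_add, spanSingleton_mul_spanSingleton,
    spanSingleton_mul_spanSingleton]

theorem algebraMap_mul_add_mem_pairSpan (a b : R) (α β : K) :
    algebraMap R K a * α + algebraMap R K b * β ∈ pairSpan R α β := by
  simp only [← Algebra.smul_def]
  exact Submodule.add_mem _ (Submodule.smul_mem _ a (left_mem_pairSpan α β))
    (Submodule.smul_mem _ b (right_mem_pairSpan α β))

theorem pairSpan_linearCombination_le (a b c d : R) (α β : K) :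
    pairSpan R (algebraMap R K a * α + algebraMap R K b * β)
      (algebraMap R K c * α + algebraMap R K d * β) ≤ pairSpan R α β :=
  pairSpan_le_iff.mpr ⟨algebraMap_mul_add_mem_pairSpan a b α β,
    algebraMap_mul_add_mem_pairSpan c d α β⟩

theorem pairSpan_specialLinearGroup (g : Matrix.SpecialLinearGroup (Fin 2) R) (α β : K) :
    pairSpan R (algebraMap R K (g 0 0) * α + algebraMap R K (g 0 1) * β)
      (algebraMap R K (g 1 0) * α + algebraMap R K (g 1 1) * β) = pairSpan R α β := by
  refine le_antisymm (pairSpan_linearCombination_le _ _ _ _ α β) ?_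
  have hdet : algebraMap R K (g 0 0) * algebraMap R K (g 1 1) -
      algebraMap R K (g 0 1) * algebraMap R K (g 1 0) = 1 := by
    rw [← map_mul, ← map_mul, ← map_sub, ← Matrix.det_fin_two, g.det_coe, map_one]
  -- the inverse of `g` is its adjugate `!![g 1 1, -g 0 1; -g 1 0, g 0 0]`
  convert pairSpan_linearCombination_le (g 1 1) (-g 0 1) (-g 1 0) (g 0 0) _ _ using 2
  · simp only [map_neg]; linear_combination (-α) * hdet
  · simp only [map_neg]; linear_combination (-β) * hdet

theorem exists_mul_add_mul_eq_one {α β : K} {J : FractionalIdeal R⁰ K}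
    (hJ : pairSpan R α β * J = 1) : ∃ p ∈ J, ∃ q ∈ J, α * p + β * q = 1 := by
  have h1 : (1 : K) ∈ pairSpan R α β * J := hJ ▸ one_mem_one R⁰
  rw [pairSpan, add_mul, mem_add] at h1
  obtain ⟨_, hu, _, hv, huv⟩ := h1
  obtain ⟨p, hp, rfl⟩ := mem_singleton_mul.mp hu
  obtain ⟨q, hq, rfl⟩ := mem_singleton_mul.mp hv
  exact ⟨p, hp, q, hq, huv⟩

theorem exists_specialLinearGroup_of_pairSpan_eq {α β γ δ : K} {J : FractionalIdeal R⁰ K}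
    (hJ : pairSpan R α β * J = 1) (h : pairSpan R γ δ = pairSpan R α β) :
    ∃ g : Matrix.SpecialLinearGroup (Fin 2) R,
      algebraMap R K (g 0 0) * α + algebraMap R K (g 0 1) * β = γ ∧
      algebraMap R K (g 1 0) * α + algebraMap R K (g 1 1) * β = δ := by
  obtain ⟨p, hp, q, hq, hpq⟩ := exists_mul_add_mul_eq_one hJ
  obtain ⟨s, hs, r, hr, hsr⟩ := exists_mul_add_mul_eq_one (h ▸ hJ)
  have integral : ∀ x ∈ pairSpan R α β * J, ∃ m : R, algebraMap R K m = x :=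
    fun x hx ↦ (mem_one_iff R⁰).mp (hJ ▸ hx)
  have hα := left_mem_pairSpan (R := R) α β
  have hβ := right_mem_pairSpan (R := R) α β
  have hγ : γ ∈ pairSpan R α β := h ▸ left_mem_pairSpan γ δ
  have hδ : δ ∈ pairSpan R α β := h ▸ right_mem_pairSpan γ δ
  -- the witness is `(γ, δ)ᵀ (p, q) + (-r, s)ᵀ (-β, α)`: its entries lie in `(αR + βR) J = R`
  -- and its determinant is `(γ s + δ r) (α p + β q) = 1`
  obtain ⟨a, ha⟩ := integral _ (Submodule.add_mem _ (mul_mem_mul hγ hp) (mul_mem_mul hβ hr))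
  obtain ⟨b, hb⟩ := integral _ (Submodule.sub_mem _ (mul_mem_mul hγ hq) (mul_mem_mul hα hr))
  obtain ⟨c, hc⟩ := integral _ (Submodule.sub_mem _ (mul_mem_mul hδ hp) (mul_mem_mul hβ hs))
  obtain ⟨d, hd⟩ := integral _ (Submodule.add_mem _ (mul_mem_mul hδ hq) (mul_mem_mul hα hs))
  have hdet : a * d - b * c = 1 := by
    apply IsFractionRing.injective R K
    rw [map_sub, map_mul, map_mul, ha, hb, hc, hd, map_one]
    linear_combination (γ * s + δ * r) * hpq + hsr
  refine ⟨⟨!![a, b; c, d], by rwa [Matrix.det_fin_two_of]⟩, ?_, ?_⟩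
  · simp only [Matrix.of_apply, Matrix.cons_val', Matrix.cons_val_zero, Matrix.cons_val_one,
      Matrix.empty_val', Matrix.cons_val_fin_one, ha, hb]
    linear_combination γ * hpq
  · simp only [Matrix.of_apply, Matrix.cons_val', Matrix.cons_val_zero, Matrix.cons_val_one,
      Matrix.empty_val', Matrix.cons_val_fin_one, hc, hd]
    linear_combination δ * hpq

end PairSpan

theorem exists_pairSpan_eq {R K : Type*} [CommRing R] [IsDedekindDomain R]
    [Field K] [Algebra R K] [IsFractionRing R K] (I : FractionalIdeal R⁰ K) :
    ∃ α β : K, pairSpan R α β = I := by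
  rcases eq_or_ne I 0 with rfl | hI
  · exact ⟨0, 0, pairSpan_eq_zero_iff.mpr ⟨rfl, rfl⟩⟩
  obtain ⟨α, hαI, hα⟩ := Submodule.exists_mem_ne_zero_of_ne_bot (coeToSubmodule_eq_bot.not.mpr hI)
  obtain ⟨β, hβ⟩ := IsDedekindDomain.exists_add_spanSingleton_mul_eq
    (spanSingleton_le_iff_mem.mpr hαI) (spanSingleton_ne_zero_iff.mpr hα) one_ne_zero
  exact ⟨α, β, by rwa [mul_one] at hβ⟩

theorem ClassGroup.mk_eq_mk_iff {R K : Type*} [CommRing R] [IsDomain R] [Field K] [Algebra R K]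
    [IsFractionRing R K] {I J : (FractionalIdeal R⁰ K)ˣ} :
    ClassGroup.mk K I = ClassGroup.mk K J ↔
      ∃ x : K, x ≠ 0 ∧ spanSingleton R⁰ x * I = (J : FractionalIdeal R⁰ K) := by
  constructor
  · intro h
    obtain ⟨⟨x, hx⟩⟩ : ((J * I⁻¹ : (FractionalIdeal R⁰ K)ˣ) : Submodule R K).IsPrincipal := by
      rw [← ClassGroup.mk_eq_one_iff, map_mul, map_inv, h, mul_inv_cancel]
    have hJI : ((J * I⁻¹ : (FractionalIdeal R⁰ K)ˣ) : FractionalIdeal R⁰ K) = spanSingleton R⁰ x :=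
      coeToSubmodule_injective (hx.trans (coe_spanSingleton R⁰ x).symm)
    refine ⟨x, ?_, ?_⟩
    · rintro rfl
      exact (J * I⁻¹).ne_zero (by rw [hJI, spanSingleton_zero])
    · rw [← hJI, Units.val_mul, mul_assoc, Units.inv_mul, mul_one]
  · rintro ⟨x, hx, hxIJ⟩
    have hJ : J = toPrincipalIdeal R K (Units.mk0 x hx) * I :=
      Units.ext (by rw [Units.val_mul, coe_toPrincipalIdeal, Units.val_mk0, hxIJ])
    have hprincipal : ClassGroup.mk K (toPrincipalIdeal R K (Units.mk0 x hx)) = 1 :=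
      ClassGroup.mk_eq_one_iff.mpr
        ⟨⟨x, by rw [coe_toPrincipalIdeal, Units.val_mk0, coe_spanSingleton]⟩⟩
    rw [hJ, map_mul, hprincipal, one_mul]

section NumberField

open NumberField

variable {F : Type*} [Field F] [NumberField F]

theorem pairIdealClass_eq_mk {α β : F} (h : ¬(α = 0 ∧ β = 0)) :
    pairIdealClass F α β =
      ClassGroup.mk F (Units.mk0 (pairSpan (𝓞 F) α β) (pairSpan_eq_zero_iff.not.mpr h)) :=
  dif_neg h

theorem pairIdealClass_mul_left {α β : F} (h : ¬(α = 0 ∧ β = 0)) {r : F} (hr : r ≠ 0) :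
    pairIdealClass F (r * α) (r * β) = pairIdealClass F α β := by
  have hr' : ¬(r * α = 0 ∧ r * β = 0) := by simpa [hr] using h
  rw [pairIdealClass_eq_mk h, pairIdealClass_eq_mk hr']
  exact (ClassGroup.mk_eq_mk_iff.mpr ⟨r, hr, (pairSpan_mul_left r α β).symm⟩).symm

theorem pairIdealClass_specialLinearGroup {α β : F} (h : ¬(α = 0 ∧ β = 0))
    (g : Matrix.SpecialLinearGroup (Fin 2) (𝓞 F)) :
    pairIdealClass F (slEntry F g 0 0 * α + slEntry F g 0 1 * β)
      (slEntry F g 1 0 * α + slEntry F g 1 1 * β) = pairIdealClass F α β := by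
  have hg := pairSpan_specialLinearGroup g α β
  have hg' : ¬(slEntry F g 0 0 * α + slEntry F g 0 1 * β = 0 ∧
      slEntry F g 1 0 * α + slEntry F g 1 1 * β = 0) := by
    rw [← pairSpan_eq_zero_iff (R := 𝓞 F)] at h ⊢
    exact hg ▸ h
  rw [pairIdealClass_eq_mk h, pairIdealClass_eq_mk hg']
  exact congrArg _ (Units.ext hg)

theorem exists_pairIdealClass_eq (c : ClassGroup (𝓞 F)) :
    ∃ α β : F, ¬(α = 0 ∧ β = 0) ∧ pairIdealClass F α β = c := by
  refine ClassGroup.induction (K := F) (fun I ↦ ?_) c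
  obtain ⟨α, β, hαβ⟩ := exists_pairSpan_eq (I : FractionalIdeal (𝓞 F)⁰ F)
  have h : ¬(α = 0 ∧ β = 0) := by
    rw [← pairSpan_eq_zero_iff (R := 𝓞 F), hαβ]
    exact I.ne_zero
  exact ⟨α, β, h, by rw [pairIdealClass_eq_mk h]; exact congrArg _ (Units.ext hαβ)⟩

theorem exists_specialLinearGroup_of_pairIdealClass_eq {α β γ δ : F} (hαβ : ¬(α = 0 ∧ β = 0))
    (hγδ : ¬(γ = 0 ∧ δ = 0)) (h : pairIdealClass F α β = pairIdealClass F γ δ) :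
    ∃ g : Matrix.SpecialLinearGroup (Fin 2) (𝓞 F), ∃ r : F, r ≠ 0 ∧
      slEntry F g 0 0 * α + slEntry F g 0 1 * β = r * γ ∧
      slEntry F g 1 0 * α + slEntry F g 1 1 * β = r * δ := by
  rw [pairIdealClass_eq_mk hαβ, pairIdealClass_eq_mk hγδ, ClassGroup.mk_eq_mk_iff] at h
  obtain ⟨x, hx, hxI⟩ := h
  rw [Units.val_mk0, Units.val_mk0] at hxI
  have hI : pairSpan (𝓞 F) α β ≠ 0 := pairSpan_eq_zero_iff.not.mpr hαβ
  have hscaled : pairSpan (𝓞 F) (x⁻¹ * γ) (x⁻¹ * δ) = pairSpan (𝓞 F) α β := by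
    rw [pairSpan_mul_left, ← hxI, ← mul_assoc, spanSingleton_mul_spanSingleton,
      inv_mul_cancel₀ hx, spanSingleton_one, one_mul]
  obtain ⟨g, hg⟩ := exists_specialLinearGroup_of_pairSpan_eq (mul_inv_cancel₀ hI) hscaled
  exact ⟨g, x⁻¹, inv_ne_zero hx, hg⟩

end NumberField

theorem classGroup_bijection_of_projective_line_general
    (F : Type*) [Field F] [NumberField F] :
    -- well defined under scaling
    (∀ α β : F, ¬(α = 0 ∧ β = 0) → ∀ r : F, r ≠ 0 →
      pairIdealClass F (r * α) (r * β) = pairIdealClass F α β) ∧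
    -- well defined under the action of SL₂(𝒪_F)
    (∀ α β : F, ¬(α = 0 ∧ β = 0) →
      ∀ g : Matrix.SpecialLinearGroup (Fin 2) (NumberField.RingOfIntegers F),
        pairIdealClass F (slEntry F g 0 0 * α + slEntry F g 0 1 * β)
            (slEntry F g 1 0 * α + slEntry F g 1 1 * β)
          = pairIdealClass F α β) ∧
    -- surjectivity
    (∀ c : ClassGroup (NumberField.RingOfIntegers F),
      ∃ α β : F, ¬(α = 0 ∧ β = 0) ∧ pairIdealClass F α β = c) ∧
    -- injectivity on SL₂(𝒪_F)-orbits
    (∀ α β γ δ : F, ¬(α = 0 ∧ β = 0) → ¬(γ = 0 ∧ δ = 0) →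
      pairIdealClass F α β = pairIdealClass F γ δ →
      ∃ g : Matrix.SpecialLinearGroup (Fin 2) (NumberField.RingOfIntegers F), ∃ r : F, r ≠ 0 ∧
        slEntry F g 0 0 * α + slEntry F g 0 1 * β = r * γ ∧
        slEntry F g 1 0 * α + slEntry F g 1 1 * β = r * δ) :=
  ⟨fun _ _ h _ ↦ pairIdealClass_mul_left h, fun _ _ h ↦ pairIdealClass_specialLinearGroup h,
    exists_pairIdealClass_eq, fun _ _ _ _ ↦ exists_specialLinearGroup_of_pairIdealClass_eq⟩

/-- The map `φ : (α : β) ↦ [α𝒪_F + β𝒪_F]` is well defined on `ℙ¹(F)` (invariant under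
scaling and under the action of `SL₂(𝒪_F)`) and induces a bijection
`SL₂(𝒪_F)\ℙ¹(F) → Cl(F)`. -/
theorem classGroup_bijection_of_projective_line
    (d : ℤ) (hd : 1 < d) (hsf : Squarefree d)
    (F : Type*) [Field F] [NumberField F]
    (hrank : Module.finrank ℚ F = 2)
    (sqrtd : F) (hsqrtd : sqrtd ^ 2 = (d : F)) :
    -- well defined under scaling
    (∀ α β : F, ¬(α = 0 ∧ β = 0) → ∀ r : F, r ≠ 0 →
      pairIdealClass F (r * α) (r * β) = pairIdealClass F α β) ∧
    -- well defined under the action of SL₂(𝒪_F)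
    (∀ α β : F, ¬(α = 0 ∧ β = 0) →
      ∀ g : Matrix.SpecialLinearGroup (Fin 2) (NumberField.RingOfIntegers F),
        pairIdealClass F (slEntry F g 0 0 * α + slEntry F g 0 1 * β)
            (slEntry F g 1 0 * α + slEntry F g 1 1 * β)
          = pairIdealClass F α β) ∧
    -- surjectivity
    (∀ c : ClassGroup (NumberField.RingOfIntegers F),
      ∃ α β : F, ¬(α = 0 ∧ β = 0) ∧ pairIdealClass F α β = c) ∧
    -- injectivity on SL₂(𝒪_F)-orbits
    (∀ α β γ δ : F, ¬(α = 0 ∧ β = 0) → ¬(γ = 0 ∧ δ = 0) →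
      pairIdealClass F α β = pairIdealClass F γ δ →
      ∃ g : Matrix.SpecialLinearGroup (Fin 2) (NumberField.RingOfIntegers F), ∃ r : F, r ≠ 0 ∧
        slEntry F g 0 0 * α + slEntry F g 0 1 * β = r * γ ∧
        slEntry F g 1 0 * α + slEntry F g 1 1 * β = r * δ) :=
  classGroup_bijection_of_projective_line_general F
end

section
/- (Hecke estimate.) Let k ∈ ℤ and C > 0, and let f : ℍ² → ℂ be a holomorphic function satisfying f(z₁+μ, z₂+μ′) = f(z₁,z₂) for all μ ∈ 𝒪_F and |f(z)| · (Im z₁ · Im z₂)^{k/2} ≤ C for all z ∈ ℍ². Then for every totally positive ν ∈ F with tr(ν𝒪_F) ⊆ ℤ, the Fourier coefficient a_ν(y) is independent of y ∈ (ℝ_{>0})², and its common value a_ν satisfies |a_ν| ≤ e^{4π} · C · N(ν)^{k/2}. -/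
/-- The `ν`-th Fourier coefficient (computed at imaginary part `(y₁, y₂)`) of a function
`f` on `ℍ² ⊂ ℂ²` which is periodic under the lattice with ℤ-basis having real embeddings
`(μ₁, μ₁')` and `(μ₂, μ₂')`; the frequency `ν` has real embeddings `(ν₁, ν₂)`. -/
noncomputable def hilbertFourierCoeff (f : ℂ × ℂ → ℂ) (μ₁ μ₁' μ₂ μ₂' ν₁ ν₂ y₁ y₂ : ℝ) : ℂ :=
  ∫ t₁ in (0:ℝ)..(1:ℝ), ∫ t₂ in (0:ℝ)..(1:ℝ),
    f (((t₁ * μ₁ + t₂ * μ₂ : ℝ) : ℂ) + (y₁ : ℂ) * Complex.I,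
       ((t₁ * μ₁' + t₂ * μ₂' : ℝ) : ℂ) + (y₂ : ℂ) * Complex.I) *
      Complex.exp ((-2 : ℂ) * (Real.pi : ℂ) * Complex.I *
        ((ν₁ : ℂ) * (((t₁ * μ₁ + t₂ * μ₂ : ℝ) : ℂ) + (y₁ : ℂ) * Complex.I) +
         (ν₂ : ℂ) * (((t₁ * μ₁' + t₂ * μ₂' : ℝ) : ℂ) + (y₂ : ℂ) * Complex.I)))

/-!
The twist `E z = f z · exp (-2πi (ν z₁ + ν' z₂))` is holomorphic on `ℍ²` and, since
`tr (ν 𝒪_F) ⊆ ℤ`, periodic under the embedded lattice `𝒪_F`. Cauchy's theorem on a rectangle shows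
that the integral of `E` over a period segment is unchanged when the segment is moved by an
imaginary multiple of that period. The two basis periods span `ℝ²` (as `σ ≠ σ'`), so the Fourier
coefficient is locally constant, hence constant, on the connected quadrant of imaginary parts.
At `y = (1/ν, 1/ν')` the growth bound gives `‖E‖ ≤ e^{4π} C N(ν)^{k/2}` pointwise, and the
parallelogram has parameter area one.
-/

open Complex Set MeasureTheory intervalIntegral Topology Real NumberField

def upperHalfPlane2 : Set (ℂ × ℂ) := {p | 0 < p.1.im ∧ 0 < p.2.im}

local notation "ℍ²" => upperHalfPlane2

lemma Convex.add_smul_mem_of_mem_uIcc {E : Type*} [AddCommGroup E] [Module ℝ E] {s : Set E}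
    (hs : Convex ℝ s) {x y : E} {t r : ℝ} (hx : x ∈ s) (hxt : x + t • y ∈ s)
    (hr : r ∈ uIcc 0 t) : x + r • y ∈ s := by
  have hseg := image_segment ℝ (AffineMap.lineMap (k := ℝ) x (x + y)) 0 t
  simp only [AffineMap.lineMap_apply_module', add_sub_cancel_left, zero_smul, zero_add,
    segment_eq_uIcc] at hseg
  refine hs.segment_subset hx hxt ?_
  rw [add_comm x (t • y), ← hseg]
  exact ⟨r, hr, by simp [AffineMap.lineMap_apply_module', add_comm]⟩

lemma integral_unitInterval_eq_integral_add_mul_I {E : Type*} [NormedAddCommGroup E]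
    [NormedSpace ℂ E] [CompleteSpace E] (H : ℂ → E) (s : ℝ)
    (hH : DifferentiableOn ℂ H (uIcc 0 1 ×ℂ uIcc 0 s))
    (hper : ∀ r ∈ uIcc 0 s, H (1 + r * I) = H (r * I)) :
    ∫ t in (0:ℝ)..1, H t = ∫ t in (0:ℝ)..1, H (t + s * I) := by
  have hrect := integral_boundary_rect_eq_zero_of_differentiableOn H 0 (1 + s * I)
    (by simpa using hH)
  have hsides : ∫ r in (0:ℝ)..s, H (1 + r * I) = ∫ r in (0:ℝ)..s, H (r * I) :=
    integral_congr hper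
  simp only [zero_re, zero_im, add_re, one_re, mul_re, ofReal_re, I_re, ofReal_im, I_im,
    add_im, one_im, mul_im] at hrect
  norm_num [hsides] at hrect
  simpa [sub_eq_zero] using hrect

def ofReIm (x y : ℝ × ℝ) : ℂ × ℂ := (x.1 + y.1 * I, x.2 + y.2 * I)

@[simp] lemma im_ofReIm_fst (x y : ℝ × ℝ) : (ofReIm x y).1.im = y.1 := by simp [ofReIm]

@[simp] lemma im_ofReIm_snd (x y : ℝ × ℝ) : (ofReIm x y).2.im = y.2 := by simp [ofReIm]

@[simp] lemma ofReIm_mem_upperHalfPlane2 {x y : ℝ × ℝ} :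
    ofReIm x y ∈ ℍ² ↔ y ∈ Ioi 0 ×ˢ Ioi 0 := by
  simp [upperHalfPlane2]

lemma integral_ofReIm_eq_of_periodic {E : ℂ × ℂ → ℂ} (hE : DifferentiableOn ℂ E ℍ²)
    {c : ℝ × ℝ} (hper : ∀ p ∈ ℍ², E (p.1 + c.1, p.2 + c.2) = E p)
    (x : ℝ × ℝ) {y : ℝ × ℝ} {s : ℝ} (hy : y ∈ Ioi 0 ×ˢ Ioi 0)
    (hys : y + s • c ∈ Ioi 0 ×ˢ Ioi 0) :
    ∫ t in (0:ℝ)..1, E (ofReIm (x + t • c) y) =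
      ∫ t in (0:ℝ)..1, E (ofReIm (x + t • c) (y + s • c)) := by
  let L : ℂ → ℂ × ℂ := fun w => (x.1 + w * c.1 + y.1 * I, x.2 + w * c.2 + y.2 * I)
  have hL : ∀ t r : ℝ, L (t + r * I) = ofReIm (x + t • c) (y + r • c) := by
    intro t r
    ext <;> simp [L, ofReIm] <;> ring
  have hL0 : ∀ t : ℝ, L t = ofReIm (x + t • c) y := fun t => by simpa using hL t 0
  have hmem : ∀ r ∈ uIcc 0 s, y + r • c ∈ Ioi 0 ×ˢ Ioi 0 := fun r hr =>
    ((convex_Ioi 0).prod (convex_Ioi 0)).add_smul_mem_of_mem_uIcc hy hys hr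
  have key := integral_unitInterval_eq_integral_add_mul_I (E ∘ L) s ?_ ?_
  · simpa only [Function.comp, hL0, hL] using key
  · refine hE.comp (by fun_prop : Differentiable ℂ L).differentiableOn fun w hw => ?_
    rw [← re_add_im w, hL, ofReIm_mem_upperHalfPlane2]
    exact hmem _ hw.2
  · intro r hr
    have h1 : L (1 + r * I) = ((L (r * I)).1 + c.1, (L (r * I)).2 + c.2) := by
      ext <;> simp [L] <;> ring
    have hLr : L (r * I) = ofReIm x (y + r • c) := by simpa using hL 0 r
    rw [Function.comp_apply, h1, hper]
    · rfl
    · rw [hLr, ofReIm_mem_upperHalfPlane2]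
      exact hmem r hr

noncomputable def parallelogramIntegral (E : ℂ × ℂ → ℂ) (v w y : ℝ × ℝ) : ℂ :=
  ∫ t₁ in (0:ℝ)..1, ∫ t₂ in (0:ℝ)..1, E (ofReIm (t₁ • v + t₂ • w) y)

lemma parallelogramIntegral_comm {E : ℂ × ℂ → ℂ} (hE : ContinuousOn E ℍ²) (v w : ℝ × ℝ)
    {y : ℝ × ℝ} (hy : y ∈ Ioi 0 ×ˢ Ioi 0) :
    parallelogramIntegral E v w y = parallelogramIntegral E w v y := by
  have hcont : Continuous fun t : ℝ × ℝ => E (ofReIm (t.1 • v + t.2 • w) y) :=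
    hE.comp_continuous (by unfold ofReIm; fun_prop) fun t => by simpa using hy
  have hint : Integrable (Function.uncurry fun t₁ t₂ : ℝ => E (ofReIm (t₁ • v + t₂ • w) y))
      ((volume.restrict (Ioc (0:ℝ) 1)).prod (volume.restrict (Ioc (0:ℝ) 1))) := by
    rw [Measure.prod_restrict, ← Measure.volume_eq_prod]
    exact (hcont.continuousOn.integrableOn_compact (isCompact_Icc.prod isCompact_Icc)).mono_set
      (prod_mono Ioc_subset_Icc_self Ioc_subset_Icc_self)
  simpa only [parallelogramIntegral, integral_of_le zero_le_one, add_comm] using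
    integral_integral_swap hint

lemma parallelogramIntegral_add_smul_right {E : ℂ × ℂ → ℂ} (hE : DifferentiableOn ℂ E ℍ²)
    {w : ℝ × ℝ} (hper : ∀ p ∈ ℍ², E (p.1 + w.1, p.2 + w.2) = E p) (v : ℝ × ℝ)
    {y : ℝ × ℝ} {s : ℝ} (hy : y ∈ Ioi 0 ×ˢ Ioi 0) (hys : y + s • w ∈ Ioi 0 ×ˢ Ioi 0) :
    parallelogramIntegral E v w (y + s • w) = parallelogramIntegral E v w y :=
  integral_congr fun t₁ _ => (integral_ofReIm_eq_of_periodic hE hper (t₁ • v) hy hys).symm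

lemma parallelogramIntegral_add_smul_left {E : ℂ × ℂ → ℂ} (hE : DifferentiableOn ℂ E ℍ²)
    {v : ℝ × ℝ} (hper : ∀ p ∈ ℍ², E (p.1 + v.1, p.2 + v.2) = E p) (w : ℝ × ℝ)
    {y : ℝ × ℝ} {s : ℝ} (hy : y ∈ Ioi 0 ×ˢ Ioi 0) (hys : y + s • v ∈ Ioi 0 ×ˢ Ioi 0) :
    parallelogramIntegral E v w (y + s • v) = parallelogramIntegral E v w y := by
  rw [parallelogramIntegral_comm hE.continuousOn _ _ hy,
    parallelogramIntegral_comm hE.continuousOn _ _ hys,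
    parallelogramIntegral_add_smul_right hE hper w hy hys]

lemma parallelogramIntegral_eq_of_periodic {E : ℂ × ℂ → ℂ} (hE : DifferentiableOn ℂ E ℍ²)
    {v w : ℝ × ℝ} (hv : ∀ p ∈ ℍ², E (p.1 + v.1, p.2 + v.2) = E p)
    (hw : ∀ p ∈ ℍ², E (p.1 + w.1, p.2 + w.2) = E p) (hvw : v.1 * w.2 - w.1 * v.2 ≠ 0)
    {y y' : ℝ × ℝ} (hy : y ∈ Ioi 0 ×ˢ Ioi 0) (hy' : y' ∈ Ioi 0 ×ˢ Ioi 0) :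
    parallelogramIntegral E v w y = parallelogramIntegral E v w y' := by
  have hQ : IsOpen (Ioi (0:ℝ) ×ˢ Ioi (0:ℝ)) := isOpen_Ioi.prod isOpen_Ioi
  refine ((convex_Ioi 0).prod (convex_Ioi 0)).isPreconnected.induction₂
    (fun a b => parallelogramIntegral E v w a = parallelogramIntegral E v w b)
    (fun p hp => ?_) (fun _ _ _ _ _ _ => Eq.trans) (fun _ _ _ _ => Eq.symm) hy hy'
  let s : ℝ × ℝ → ℝ := fun q => (w.2 * (q - p).1 - w.1 * (q - p).2) / (v.1 * w.2 - w.1 * v.2)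
  let u : ℝ × ℝ → ℝ := fun q => (v.1 * (q - p).2 - v.2 * (q - p).1) / (v.1 * w.2 - w.1 * v.2)
  have hdecomp : ∀ q, p + s q • v + u q • w = q := fun q => by
    ext <;> simp only [s, u, Prod.fst_add, Prod.snd_add, Prod.smul_fst, Prod.smul_snd,
      Prod.fst_sub, Prod.snd_sub, smul_eq_mul, add_assoc, div_mul_eq_mul_div] <;>
      rw [← add_div, ← eq_sub_iff_add_eq', div_eq_iff hvw] <;> ring
  have hmid : ∀ᶠ q in 𝓝 p, p + s q • v ∈ Ioi 0 ×ˢ Ioi 0 := by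
    have hcont : Continuous fun q => p + s q • v := by fun_prop
    have hp' : p + s p • v = p := by simp [s]
    exact hcont.continuousAt.preimage_mem_nhds (by rw [hp']; exact hQ.mem_nhds hp)
  filter_upwards [self_mem_nhdsWithin, nhdsWithin_le_nhds hmid] with q hq hmidq
  calc parallelogramIntegral E v w p
      = parallelogramIntegral E v w (p + s q • v) :=
        (parallelogramIntegral_add_smul_left hE hv w hp hmidq).symm
    _ = parallelogramIntegral E v w (p + s q • v + u q • w) :=
        (parallelogramIntegral_add_smul_right hE hw v hmidq (by rwa [hdecomp])).symm
    _ = parallelogramIntegral E v w q := by rw [hdecomp]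

lemma norm_parallelogramIntegral_le {E : ℂ × ℂ → ℂ} {M : ℝ} {y : ℝ × ℝ}
    (hM : ∀ x, ‖E (ofReIm x y)‖ ≤ M) (v w : ℝ × ℝ) : ‖parallelogramIntegral E v w y‖ ≤ M := by
  have hunit : ∀ {g : ℝ → ℂ}, (∀ t, ‖g t‖ ≤ M) → ‖∫ t in (0:ℝ)..1, g t‖ ≤ M := fun hg => by
    simpa using norm_integral_le_of_norm_le_const (a := 0) (b := 1) fun t _ => hg t
  exact hunit fun t₁ => hunit fun t₂ => hM _

noncomputable def fourierTwist (f : ℂ × ℂ → ℂ) (ν : ℝ × ℝ) (p : ℂ × ℂ) : ℂ :=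
  f p * cexp ((-2 : ℂ) * π * I * ((ν.1 : ℂ) * p.1 + (ν.2 : ℂ) * p.2))

lemma hilbertFourierCoeff_eq_parallelogramIntegral (f : ℂ × ℂ → ℂ)
    (μ₁ μ₁' μ₂ μ₂' ν₁ ν₂ y₁ y₂ : ℝ) :
    hilbertFourierCoeff f μ₁ μ₁' μ₂ μ₂' ν₁ ν₂ y₁ y₂ =
      parallelogramIntegral (fourierTwist f (ν₁, ν₂)) (μ₁, μ₁') (μ₂, μ₂') (y₁, y₂) :=
  rfl

lemma DifferentiableOn.fourierTwist {f : ℂ × ℂ → ℂ} {s : Set (ℂ × ℂ)}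
    (hf : DifferentiableOn ℂ f s) (ν : ℝ × ℝ) : DifferentiableOn ℂ (fourierTwist f ν) s :=
  hf.mul (by fun_prop : Differentiable ℂ _).differentiableOn

lemma fourierTwist_add_of_eq_intCast {f : ℂ × ℂ → ℂ} {ν c : ℝ × ℝ} {n : ℤ}
    (hn : ν.1 * c.1 + ν.2 * c.2 = n) {p : ℂ × ℂ} (hfp : f (p.1 + c.1, p.2 + c.2) = f p) :
    fourierTwist f ν (p.1 + c.1, p.2 + c.2) = fourierTwist f ν p := by
  have hexp : (-2 : ℂ) * π * I * (ν.1 * (p.1 + c.1) + ν.2 * (p.2 + c.2)) =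
      (-2 : ℂ) * π * I * (ν.1 * p.1 + ν.2 * p.2) + (-n : ℤ) * (2 * π * I) := by
    have hnC : (ν.1 : ℂ) * c.1 + ν.2 * c.2 = n := by exact_mod_cast hn
    push_cast
    linear_combination (-2 * π * I) * hnC
  rw [fourierTwist, fourierTwist, hfp, hexp, Complex.exp_add, Complex.exp_int_mul_two_pi_mul_I,
    mul_one]

lemma norm_fourierTwist (f : ℂ × ℂ → ℂ) (ν : ℝ × ℝ) (p : ℂ × ℂ) :
    ‖fourierTwist f ν p‖ = ‖f p‖ * Real.exp (2 * π * (ν.1 * p.1.im + ν.2 * p.2.im)) := by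
  simp [fourierTwist, Complex.norm_exp]

lemma norm_fourierTwist_ofReIm_inv_le {f : ℂ × ℂ → ℂ} {r C : ℝ}
    (hbound : ∀ p : ℂ × ℂ, 0 < p.1.im → 0 < p.2.im → ‖f p‖ * (p.1.im * p.2.im) ^ r ≤ C)
    {ν : ℝ × ℝ} (hν : ν ∈ Ioi 0 ×ˢ Ioi 0) (x : ℝ × ℝ) :
    ‖fourierTwist f ν (ofReIm x (ν.1⁻¹, ν.2⁻¹))‖ ≤ Real.exp (4 * π) * C * (ν.1 * ν.2) ^ r := by
  obtain ⟨hν₁, hν₂⟩ := hν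
  have hf := hbound (ofReIm x (ν.1⁻¹, ν.2⁻¹)) (by simpa using hν₁) (by simpa using hν₂)
  rw [im_ofReIm_fst, im_ofReIm_snd, ← mul_inv, Real.inv_rpow (mul_pos hν₁ hν₂).le,
    ← div_eq_mul_inv, div_le_iff₀ (Real.rpow_pos_of_pos (mul_pos hν₁ hν₂) r)] at hf
  have hexp : 2 * π * (ν.1 * ν.1⁻¹ + ν.2 * ν.2⁻¹) = 4 * π := by
    rw [mul_inv_cancel₀ hν₁.ne', mul_inv_cancel₀ hν₂.ne']
    ring
  rw [norm_fourierTwist, im_ofReIm_fst, im_ofReIm_snd, hexp]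
  linarith [mul_le_mul_of_nonneg_right hf (Real.exp_nonneg (4 * π))]

lemma embedding_basis_det_ne_zero {F : Type*} [Field F] [NumberField F]
    {σ σ' : F →+* ℝ} (hσ : σ ≠ σ') (b : Module.Basis (Fin 2) ℤ (RingOfIntegers F)) :
    σ (algebraMap (RingOfIntegers F) F (b 0)) * σ' (algebraMap (RingOfIntegers F) F (b 1)) -
      σ (algebraMap (RingOfIntegers F) F (b 1)) * σ' (algebraMap (RingOfIntegers F) F (b 0))
      ≠ 0 := by
  intro hdet
  let B := Module.Basis.localizationLocalization ℚ (nonZeroDivisors ℤ) F b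
  have hB : ∀ i, B i = algebraMap (RingOfIntegers F) F (b i) :=
    Module.Basis.localizationLocalization_apply ℚ (nonZeroDivisors ℤ) F b
  let L : F →ₗ[ℚ] ℝ := σ' (B 0) • σ.toRatAlgHom.toLinearMap - σ (B 0) • σ'.toRatAlgHom.toLinearMap
  have hL : L = 0 := B.ext fun i => by
    fin_cases i
    · simp [L]
      ring
    · simp [L, hB]
      linear_combination -hdet
  have hL' : ∀ x, σ x * σ' (B 0) = σ (B 0) * σ' x := fun x => by
    have := LinearMap.congr_fun hL x
    simp [L] at this
    linear_combination this
  have h0 : σ' (B 0) = σ (B 0) := by simpa using hL' 1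
  have hσ0 : σ (B 0) ≠ 0 := by simpa using B.ne_zero 0
  exact hσ (RingHom.ext fun x => mul_left_cancel₀ hσ0 (by rw [← hL', h0, mul_comm]))

theorem hecke_estimate_general
    (F : Type*) [Field F] [NumberField F]
    (σ σ' : F →+* ℝ) (hσ : σ ≠ σ')
    (b : Module.Basis (Fin 2) ℤ (NumberField.RingOfIntegers F))
    (k : ℤ) (C : ℝ)
    (f : ℂ × ℂ → ℂ)
    (hf : DifferentiableOn ℂ f {p : ℂ × ℂ | 0 < p.1.im ∧ 0 < p.2.im})
    (hper : ∀ μ : NumberField.RingOfIntegers F, ∀ p : ℂ × ℂ, 0 < p.1.im → 0 < p.2.im →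
      f (p.1 + (σ (algebraMap (NumberField.RingOfIntegers F) F μ) : ℂ),
         p.2 + (σ' (algebraMap (NumberField.RingOfIntegers F) F μ) : ℂ)) = f p)
    (hbound : ∀ p : ℂ × ℂ, 0 < p.1.im → 0 < p.2.im →
      ‖f p‖ * (p.1.im * p.2.im) ^ ((k : ℝ) / 2) ≤ C)
    (ν : F) (hνpos : 0 < σ ν ∧ 0 < σ' ν)
    (hνtr : ∀ μ : NumberField.RingOfIntegers F, ∃ n : ℤ,
      σ (ν * algebraMap (NumberField.RingOfIntegers F) F μ) +
        σ' (ν * algebraMap (NumberField.RingOfIntegers F) F μ) = (n : ℝ)) :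
    -- the Fourier coefficient is independent of y
    (∀ y₁ y₂ w₁ w₂ : ℝ, 0 < y₁ → 0 < y₂ → 0 < w₁ → 0 < w₂ →
      hilbertFourierCoeff f (σ (algebraMap (NumberField.RingOfIntegers F) F (b 0)))
          (σ' (algebraMap (NumberField.RingOfIntegers F) F (b 0)))
          (σ (algebraMap (NumberField.RingOfIntegers F) F (b 1)))
          (σ' (algebraMap (NumberField.RingOfIntegers F) F (b 1)))
          (σ ν) (σ' ν) y₁ y₂
        = hilbertFourierCoeff f (σ (algebraMap (NumberField.RingOfIntegers F) F (b 0)))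
            (σ' (algebraMap (NumberField.RingOfIntegers F) F (b 0)))
            (σ (algebraMap (NumberField.RingOfIntegers F) F (b 1)))
            (σ' (algebraMap (NumberField.RingOfIntegers F) F (b 1)))
            (σ ν) (σ' ν) w₁ w₂) ∧
    -- the Hecke bound |a_ν| ≤ e^{4π} C N(ν)^{k/2}
    (∀ y₁ y₂ : ℝ, 0 < y₁ → 0 < y₂ →
      ‖hilbertFourierCoeff f
          (σ (algebraMap (NumberField.RingOfIntegers F) F (b 0)))
          (σ' (algebraMap (NumberField.RingOfIntegers F) F (b 0)))
          (σ (algebraMap (NumberField.RingOfIntegers F) F (b 1)))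
          (σ' (algebraMap (NumberField.RingOfIntegers F) F (b 1)))
          (σ ν) (σ' ν) y₁ y₂‖
        ≤ Real.exp (4 * Real.pi) * C * (σ ν * σ' ν) ^ ((k : ℝ) / 2)) := by
  simp only [hilbertFourierCoeff_eq_parallelogramIntegral]
  let φ : RingOfIntegers F → ℝ × ℝ := fun μ => (σ (algebraMap _ F μ), σ' (algebraMap _ F μ))
  have hEper : ∀ μ, ∀ p ∈ ℍ², fourierTwist f (σ ν, σ' ν) (p.1 + (φ μ).1, p.2 + (φ μ).2) =
      fourierTwist f (σ ν, σ' ν) p := fun μ p hp => by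
    obtain ⟨n, hn⟩ := hνtr μ
    exact fourierTwist_add_of_eq_intCast (by simpa [φ] using hn) (hper μ p hp.1 hp.2)
  have hconst := fun y y' => parallelogramIntegral_eq_of_periodic (hf.fourierTwist _)
    (hEper (b 0)) (hEper (b 1)) (embedding_basis_det_ne_zero hσ b) (y := y) (y' := y')
  refine ⟨fun y₁ y₂ w₁ w₂ hy₁ hy₂ hw₁ hw₂ => hconst _ _ ⟨hy₁, hy₂⟩ ⟨hw₁, hw₂⟩,
    fun y₁ y₂ hy₁ hy₂ => ?_⟩
  rw [hconst (y₁, y₂) ((σ ν)⁻¹, (σ' ν)⁻¹) ⟨hy₁, hy₂⟩ ⟨inv_pos.2 hνpos.1, inv_pos.2 hνpos.2⟩]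
  exact norm_parallelogramIntegral_le (norm_fourierTwist_ofReIm_inv_le hbound hνpos) _ _

/-- Hecke estimate: if `f` is holomorphic on `ℍ²`, periodic under `𝒪_F`, and satisfies
`|f(z)| (Im z₁ Im z₂)^{k/2} ≤ C`, then for every totally positive `ν` with
`tr(ν𝒪_F) ⊆ ℤ` the Fourier coefficient `a_ν` is independent of `y` and satisfies
`|a_ν| ≤ e^{4π} C N(ν)^{k/2}`. -/
theorem hecke_estimate
    (d : ℤ) (hd : 1 < d) (hsf : Squarefree d)
    (F : Type*) [Field F] [NumberField F]
    (hrank : Module.finrank ℚ F = 2)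
    (sqrtd : F) (hsqrtd : sqrtd ^ 2 = (d : F))
    (σ σ' : F →+* ℝ) (hσ : σ ≠ σ')
    (b : Module.Basis (Fin 2) ℤ (NumberField.RingOfIntegers F))
    (k : ℤ) (C : ℝ) (hC : 0 < C)
    (f : ℂ × ℂ → ℂ)
    (hf : DifferentiableOn ℂ f {p : ℂ × ℂ | 0 < p.1.im ∧ 0 < p.2.im})
    (hper : ∀ μ : NumberField.RingOfIntegers F, ∀ p : ℂ × ℂ, 0 < p.1.im → 0 < p.2.im →
      f (p.1 + (σ (algebraMap (NumberField.RingOfIntegers F) F μ) : ℂ),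
         p.2 + (σ' (algebraMap (NumberField.RingOfIntegers F) F μ) : ℂ)) = f p)
    (hbound : ∀ p : ℂ × ℂ, 0 < p.1.im → 0 < p.2.im →
      ‖f p‖ * (p.1.im * p.2.im) ^ ((k : ℝ) / 2) ≤ C)
    (ν : F) (hνpos : 0 < σ ν ∧ 0 < σ' ν)
    (hνtr : ∀ μ : NumberField.RingOfIntegers F, ∃ n : ℤ,
      σ (ν * algebraMap (NumberField.RingOfIntegers F) F μ) +
        σ' (ν * algebraMap (NumberField.RingOfIntegers F) F μ) = (n : ℝ)) :
    -- the Fourier coefficient is independent of y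
    (∀ y₁ y₂ w₁ w₂ : ℝ, 0 < y₁ → 0 < y₂ → 0 < w₁ → 0 < w₂ →
      hilbertFourierCoeff f (σ (algebraMap (NumberField.RingOfIntegers F) F (b 0)))
          (σ' (algebraMap (NumberField.RingOfIntegers F) F (b 0)))
          (σ (algebraMap (NumberField.RingOfIntegers F) F (b 1)))
          (σ' (algebraMap (NumberField.RingOfIntegers F) F (b 1)))
          (σ ν) (σ' ν) y₁ y₂
        = hilbertFourierCoeff f (σ (algebraMap (NumberField.RingOfIntegers F) F (b 0)))
            (σ' (algebraMap (NumberField.RingOfIntegers F) F (b 0)))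
            (σ (algebraMap (NumberField.RingOfIntegers F) F (b 1)))
            (σ' (algebraMap (NumberField.RingOfIntegers F) F (b 1)))
            (σ ν) (σ' ν) w₁ w₂) ∧
    -- the Hecke bound |a_ν| ≤ e^{4π} C N(ν)^{k/2}
    (∀ y₁ y₂ : ℝ, 0 < y₁ → 0 < y₂ →
      ‖hilbertFourierCoeff f
          (σ (algebraMap (NumberField.RingOfIntegers F) F (b 0)))
          (σ' (algebraMap (NumberField.RingOfIntegers F) F (b 0)))
          (σ (algebraMap (NumberField.RingOfIntegers F) F (b 1)))
          (σ' (algebraMap (NumberField.RingOfIntegers F) F (b 1)))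
          (σ ν) (σ' ν) y₁ y₂‖
        ≤ Real.exp (4 * Real.pi) * C * (σ ν * σ' ν) ^ ((k : ℝ) / 2)) :=
  hecke_estimate_general F σ σ' hσ b k C f hf hper hbound ν hνpos hνtr
end

section
/- (Cartan–Dieudonné.) Let k be a field of characteristic ≠ 2 and (V,Q) a finite-dimensional nondegenerate quadratic space over k. For x ∈ V with Q(x) ≠ 0 let τ_x : V → V be the reflection τ_x(y) = y − (B(y,x)/Q(x))·x. Then every isometry σ of (V,Q) onto itself is a composition of finitely many reflections τ_x with Q(x) ≠ 0; moreover, σ can be written as a composition of an even number of such reflections if and only if det σ = 1. -/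
/-!
Choose a `B`-orthogonal basis `b`; nondegeneracy makes every `Q (b i)` nonzero. Suppose an
isometry `σ` fixes `b j` for all `j ∉ s`, and let `i ∈ s`, `y = σ (b i)`. Since
`Q (y - b i) + Q (y + b i) = 4 Q (b i) ≠ 0`, either the reflection in `y - b i`, or the
reflections in `y + b i` and then in `b i`, carry `y` back to `b i`. These reflections are in
vectors of `span {b i, y}`, which is orthogonal to every other fixed `b j`, so composing them
with `σ` fixes one more basis vector; induction on `s` ends at the identity.

A reflection is the transvection `y ↦ y + f y • x` with `f x = -2`, so it has determinant `-1`;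
as `-1 ≠ 1`, the parity of the number of reflections is read off from `det σ`.
-/

/-- The reflection `τ_x(y) = y − (B(y,x)/Q(x)) x` in the hyperplane orthogonal to `x`,
where `B` is the polar bilinear form of the quadratic form `Q`. -/
noncomputable def quadraticReflection {k V : Type*} [Field k] [AddCommGroup V] [Module k V]
    (Q : QuadraticForm k V) (x : V) : V →ₗ[k] V :=
  LinearMap.id - (Q x)⁻¹ • (((QuadraticMap.polarBilin Q).flip x).smulRight x)

open QuadraticMap

section Reflection

variable {k V : Type*} [Field k] [AddCommGroup V] [Module k V] (Q : QuadraticForm k V)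

theorem quadraticReflection_apply (x y : V) :
    quadraticReflection Q x y = y - ((Q x)⁻¹ * polar Q y x) • x := by
  simp [quadraticReflection, smul_smul]

theorem inv_mul_polar_self {x : V} (hx : Q x ≠ 0) : (Q x)⁻¹ * polar Q x x = 2 := by
  rw [polar_self, two_nsmul]
  field_simp
  ring

theorem quadraticReflection_eq_transvection (x : V) :
    quadraticReflection Q x = LinearMap.transvection (-((Q x)⁻¹ • (polarBilin Q).flip x)) x := by
  ext y
  simp [quadraticReflection_apply, LinearMap.transvection.apply, sub_eq_add_neg]

theorem det_quadraticReflection [FiniteDimensional k V] {x : V} (hx : Q x ≠ 0) :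
    LinearMap.det (quadraticReflection Q x) = -1 := by
  rw [quadraticReflection_eq_transvection, LinearMap.transvection.det]
  rw [LinearMap.neg_apply, LinearMap.smul_apply, LinearMap.flip_apply, polarBilin_apply_apply,
    smul_eq_mul, inv_mul_polar_self Q hx]
  norm_num

theorem quadraticReflection_apply_of_polar_eq_zero {x y : V} (h : polar Q y x = 0) :
    quadraticReflection Q x y = y := by
  simp [quadraticReflection_apply, h]

theorem quadraticReflection_apply_self {x : V} (hx : Q x ≠ 0) :
    quadraticReflection Q x x = -x := by
  rw [quadraticReflection_apply, inv_mul_polar_self Q hx, two_smul]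
  abel

theorem quadraticReflection_mul_self {x : V} (hx : Q x ≠ 0) :
    quadraticReflection Q x * quadraticReflection Q x = 1 := by
  ext y
  simp only [Module.End.mul_apply, Module.End.one_apply]
  rw [quadraticReflection_apply Q x (quadraticReflection Q x y), quadraticReflection_apply,
    polar_sub_left, polar_smul_left, polar_self, two_nsmul, smul_eq_mul]
  field_simp
  module

theorem map_quadraticReflection_apply {x : V} (hx : Q x ≠ 0) (y : V) :
    Q (quadraticReflection Q x y) = Q y := by
  rw [quadraticReflection_apply, sub_eq_add_neg, QuadraticMap.map_add Q, ← neg_smul,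
    QuadraticMap.map_smul, polar_smul_right, smul_eq_mul, smul_eq_mul]
  field_simp
  ring

theorem map_sub_eq_add_sub_polar (a b : V) : Q (a - b) = Q a + Q b - polar Q a b := by
  rw [sub_eq_add_neg, QuadraticMap.map_add Q, QuadraticMap.map_neg, polar_neg_right,
    ← sub_eq_add_neg]

theorem quadraticReflection_sub_apply {a b : V} (hab : Q a = Q b) (hsub : Q (a - b) ≠ 0) :
    quadraticReflection Q (a - b) a = b := by
  have hpolar : polar Q a (a - b) = Q (a - b) := by
    rw [polar_sub_right, polar_self, two_nsmul, map_sub_eq_add_sub_polar, hab]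
  rw [quadraticReflection_apply, hpolar, inv_mul_cancel₀ hsub, one_smul, sub_sub_cancel]

theorem polar_map_of_isometry {σ : V →ₗ[k] V} (hσ : ∀ y, Q (σ y) = Q y) (u v : V) :
    polar Q (σ u) (σ v) = polar Q u v := by
  simp only [polar, ← map_add, hσ]

section ReflectionList

variable {Q} {l : List V}

theorem prod_reverse_map_quadraticReflection_mul (hl : ∀ z ∈ l, Q z ≠ 0) :
    (l.reverse.map (quadraticReflection Q)).prod * (l.map (quadraticReflection Q)).prod = 1 := by
  induction l with
  | nil => simp
  | cons a l ih =>
    simp only [List.forall_mem_cons] at hl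
    simp only [List.reverse_cons, List.map_append, List.map_cons, List.map_nil, List.prod_append,
      List.prod_cons, List.prod_nil, mul_one]
    rw [mul_assoc, ← mul_assoc (quadraticReflection Q a), quadraticReflection_mul_self Q hl.1,
      one_mul, ih hl.2]

theorem map_prod_map_quadraticReflection_apply (hl : ∀ z ∈ l, Q z ≠ 0) (y : V) :
    Q ((l.map (quadraticReflection Q)).prod y) = Q y := by
  induction l with
  | nil => simp
  | cons a l ih =>
    simp only [List.forall_mem_cons] at hl
    simp only [List.map_cons, List.prod_cons, Module.End.mul_apply,
      map_quadraticReflection_apply Q hl.1, ih hl.2]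

theorem prod_map_quadraticReflection_apply_of_polar_eq_zero {w : V}
    (hw : ∀ z ∈ l, polar Q w z = 0) : (l.map (quadraticReflection Q)).prod w = w := by
  induction l with
  | nil => simp
  | cons a l ih =>
    simp only [List.forall_mem_cons] at hw
    simp only [List.map_cons, List.prod_cons, Module.End.mul_apply, ih hw.2,
      quadraticReflection_apply_of_polar_eq_zero Q hw.1]

theorem det_prod_map_quadraticReflection [FiniteDimensional k V] (hl : ∀ z ∈ l, Q z ≠ 0) :
    LinearMap.det (l.map (quadraticReflection Q)).prod = (-1) ^ l.length := by
  rw [map_list_prod, List.map_map, List.prod_eq_pow_card _ (-1 : k), List.length_map]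
  simp only [List.mem_map, Function.comp_apply, forall_exists_index, and_imp,
    forall_apply_eq_imp_iff₂]
  exact fun z hz => det_quadraticReflection Q (hl z hz)

end ReflectionList

theorem exists_prod_map_quadraticReflection_apply_eq (hchar : (2 : k) ≠ 0) {x y : V}
    (hx : Q x ≠ 0) (hxy : Q y = Q x) :
    ∃ l : List V, (∀ z ∈ l, Q z ≠ 0) ∧ (∀ z ∈ l, z ∈ Submodule.span k {x, y}) ∧
      (l.map (quadraticReflection Q)).prod y = x := by
  have hxmem : x ∈ Submodule.span k {x, y} := Submodule.subset_span (by simp)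
  have hymem : y ∈ Submodule.span k {x, y} := Submodule.subset_span (by simp)
  by_cases hsub : Q (y - x) = 0
  · have hadd : Q (y + x) ≠ 0 := by
      have hparallelogram : Q (y - x) + Q (y + x) = 2 * 2 * Q x := by
        rw [map_sub_eq_add_sub_polar, QuadraticMap.map_add Q, hxy]
        ring
      rw [hsub, zero_add] at hparallelogram
      rw [hparallelogram]
      exact mul_ne_zero (mul_ne_zero hchar hchar) hx
    have hyx : quadraticReflection Q (y + x) y = -x := by
      simpa using quadraticReflection_sub_apply Q (a := y) (b := -x) (by simpa using hxy)
        (by simpa using hadd)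
    refine ⟨[x, y + x], by simp [hx, hadd], by simpa using ⟨hxmem, add_mem hymem hxmem⟩, ?_⟩
    simp [hyx, quadraticReflection_apply_self Q hx]
  · refine ⟨[y - x], by simpa using hsub, by simpa using sub_mem hymem hxmem, ?_⟩
    simpa using quadraticReflection_sub_apply Q hxy hsub

theorem exists_eq_prod_map_quadraticReflection_of_apply_basis_eq (hchar : (2 : k) ≠ 0)
    {ι : Type*} (b : Module.Basis ι k V) (hb : (polarBilin Q).IsOrthoᵢ b)
    (hbQ : ∀ i, Q (b i) ≠ 0) (s : Finset ι) {σ : V →ₗ[k] V} (hσ : ∀ y, Q (σ y) = Q y)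
    (hfix : ∀ i ∉ s, σ (b i) = b i) :
    ∃ l : List V, (∀ z ∈ l, Q z ≠ 0) ∧ σ = (l.map (quadraticReflection Q)).prod := by
  classical
  induction s using Finset.induction_on generalizing σ with
  | empty => exact ⟨[], by simp, b.ext fun i => by simpa using hfix i (Finset.notMem_empty i)⟩
  | insert i s _ ih =>
    obtain ⟨l, hlQ, hlspan, hl⟩ :=
      exists_prod_map_quadraticReflection_apply_eq Q hchar (hbQ i) (hσ (b i))
    set ρ := (l.map (quadraticReflection Q)).prod
    have hρσ : ∀ j ∉ s, (ρ * σ) (b j) = b j := by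
      intro j hj
      rcases eq_or_ne j i with rfl | hji
      · exact hl
      have hσj : σ (b j) = b j := hfix j (by simp [hji, hj])
      have hpolar : Submodule.span k {b i, σ (b i)} ≤ LinearMap.ker (polarBilin Q (b j)) := by
        rw [Submodule.span_le, Set.insert_subset_iff, Set.singleton_subset_iff]
        refine ⟨hb hji, ?_⟩
        rw [SetLike.mem_coe, LinearMap.mem_ker, polarBilin_apply_apply, ← hσj,
          polar_map_of_isometry Q hσ]
        exact hb hji
      rw [Module.End.mul_apply, hσj]
      exact prod_map_quadraticReflection_apply_of_polar_eq_zero fun z hz => hpolar (hlspan z hz)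
    obtain ⟨l', hl'Q, hl'⟩ := ih (σ := ρ * σ)
      (fun y => by rw [Module.End.mul_apply, map_prod_map_quadraticReflection_apply hlQ, hσ]) hρσ
    refine ⟨l.reverse ++ l', by simpa [or_imp, forall_and] using ⟨hlQ, hl'Q⟩, ?_⟩
    rw [List.map_append, List.prod_append, ← hl', ← mul_assoc,
      prod_reverse_map_quadraticReflection_mul hlQ, one_mul]

theorem exists_eq_prod_map_quadraticReflection [FiniteDimensional k V] (hchar : (2 : k) ≠ 0)
    (hnd : (polarBilin Q).Nondegenerate) {σ : V →ₗ[k] V} (hσ : ∀ y, Q (σ y) = Q y) :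
    ∃ l : List V, (∀ z ∈ l, Q z ≠ 0) ∧ σ = (l.map (quadraticReflection Q)).prod := by
  have : Invertible (2 : k) := invertibleOfNonzero hchar
  obtain ⟨b, hb⟩ :=
    LinearMap.BilinForm.exists_orthogonal_basis (B := polarBilin Q) ⟨fun u v => polar_comm Q u v⟩
  have hbQ (i : Fin _) : Q (b i) ≠ 0 := fun h =>
    LinearMap.BilinForm.iIsOrtho.not_isOrtho_basis_self_of_nondegenerate hb hnd i
      (by simp [polar_self, h])
  exact exists_eq_prod_map_quadraticReflection_of_apply_basis_eq Q hchar b hb hbQ Finset.univ hσ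
    (by simp)

end Reflection

/-- Cartan–Dieudonné: over a field of characteristic `≠ 2`, every isometry of a
finite-dimensional nondegenerate quadratic space is a composition of finitely many
reflections; it can be written as a composition of an even number of reflections if and
only if its determinant is `1`. -/
theorem cartan_dieudonne {k V : Type*} [Field k] [AddCommGroup V] [Module k V]
    [FiniteDimensional k V]
    (hchar : (2 : k) ≠ 0)
    (Q : QuadraticForm k V)
    (hnd : (QuadraticMap.polarBilin Q).Nondegenerate)
    (σ : V ≃ₗ[k] V) (hσ : ∀ x, Q (σ x) = Q x) :
    (∃ l : List V, (∀ x ∈ l, Q x ≠ 0) ∧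
      (σ : V →ₗ[k] V) = (l.map (quadraticReflection Q)).prod) ∧
    ((∃ l : List V, (∀ x ∈ l, Q x ≠ 0) ∧ Even l.length ∧
        (σ : V →ₗ[k] V) = (l.map (quadraticReflection Q)).prod) ↔
      LinearMap.det (σ : V →ₗ[k] V) = 1) := by
  obtain ⟨l, hlQ, hl⟩ := exists_eq_prod_map_quadraticReflection Q hchar hnd (σ := σ) hσ
  refine ⟨⟨l, hlQ, hl⟩, ⟨fun ⟨m, hmQ, hm, hσm⟩ => ?_, fun hdet => ⟨l, hlQ, ?_, hl⟩⟩⟩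
  · rw [hσm, det_prod_map_quadraticReflection hmQ, hm.neg_one_pow]
  · rw [hl, det_prod_map_quadraticReflection hlQ] at hdet
    exact (neg_one_pow_eq_one_iff_even (fun h => hchar (by linear_combination -h))).mp hdet
end

section
/- Let k be a field of characteristic ≠ 2 and (V,Q) an n-dimensional quadratic space over k admitting a basis v₁, …, v_n with B(v_i, v_j) = 0 for i ≠ j and Q(v_i) ≠ 0 for all i. Set δ = ι(v₁)⋯ι(v_n) in the Clifford algebra C_V. If n is even, the center of C_V equals k·1 (the scalars); if n is odd, the center of C_V equals k·1 + k·δ (the k-span of 1 and δ). -/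
/-!
Write `eᵢ = ι Q (b i)`. The sorted monomials `e_{i₁} ⋯ e_{i_r}` (`i₁ < ⋯ < i_r`) span the
Clifford algebra, and moving `eᵢ` across a monomial costs the sign `(-1)^c`, where `c` counts the
factors of the monomial other than `eᵢ`. Hence the averaging operator `x ↦ (x + eᵢ x eᵢ⁻¹) / 2`
fixes or kills each monomial according to the parity of `c`, while it fixes every central element.
Applying all of them to a central `x` leaves `x` in the span of the sorted monomials for which
every such count is even, and these are only `1` and, for odd `n`, `δ = e₁ ⋯ eₙ`; conversely `δ`
commutes with every `eᵢ` when `n` is odd.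
-/

open CliffordAlgebra

lemma List.countP_ne_add_one_eq_length {α : Type*} [DecidableEq α] {l : List α} (hl : l.Nodup)
    {i : α} (hi : i ∈ l) : l.countP (· ≠ i) + 1 = l.length := by
  rw [l.length_eq_countP_add_countP (· ≠ i), ← List.count_eq_one_of_mem hl hi,
    List.count_eq_countP]
  exact congrArg _ (List.countP_congr fun _ _ => by simp)

lemma eq_nil_or_eq_finRange_of_forall_even_countP_ne {n : ℕ} {l : List (Fin n)}
    (hl : l.Pairwise (· < ·)) (heven : ∀ i, Even (l.countP (· ≠ i))) :
    l = [] ∨ (Odd n ∧ l = List.finRange n) := by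
  rcases eq_or_ne l [] with rfl | hne
  · exact Or.inl rfl
  obtain ⟨a, ha⟩ := l.exists_mem_of_ne_nil hne
  have hodd : Odd l.length := by
    obtain ⟨m, hm⟩ := heven a
    exact ⟨m, by have := List.countP_ne_add_one_eq_length hl.nodup ha; omega⟩
  have hall (i : Fin n) : i ∈ l := by
    by_contra hi
    have hlen : l.countP (· ≠ i) = l.length :=
      List.countP_eq_length.mpr fun j hj => by simpa using ne_of_mem_of_not_mem hj hi
    exact Nat.not_even_iff_odd.mpr hodd (hlen ▸ heven i)
  have hfin : l = List.finRange n := hl.eq_of_mem_iff (List.pairwise_lt_finRange n) (by simp [hall])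
  exact Or.inr ⟨by simpa [hfin] using hodd, hfin⟩

namespace CliffordAlgebra

section CommRing

variable {R M κ : Type*} [CommRing R] [AddCommGroup M] [Module R M]
  (Q : QuadraticForm R M) (v : κ → M)

noncomputable def ιProd (l : List κ) : CliffordAlgebra Q :=
  (l.map fun i => ι Q (v i)).prod

@[simp]
lemma ιProd_nil : ιProd Q v [] = 1 := rfl

@[simp]
lemma ιProd_cons (i : κ) (l : List κ) : ιProd Q v (i :: l) = ι Q (v i) * ιProd Q v l :=
  List.prod_cons

variable {Q v}

lemma ι_mul_ιProd [DecidableEq κ] (hv : Pairwise fun i j => Q.IsOrtho (v i) (v j))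
    (i : κ) (l : List κ) :
    ι Q (v i) * ιProd Q v l = (-1 : R) ^ l.countP (· ≠ i) • (ιProd Q v l * ι Q (v i)) := by
  induction l with
  | nil => simp
  | cons a l ih =>
    by_cases hai : a = i
    · subst hai
      rw [ιProd_cons, List.countP_cons_of_neg (by simp), mul_assoc _ (ιProd Q v l),
        ← mul_smul_comm, ← ih]
    · rw [ιProd_cons, ι_mul_ι_mul_of_isOrtho _ (hv fun h => hai h.symm), ih,
        List.countP_cons_of_pos (by simpa using hai), pow_succ, mul_neg_one, neg_smul,
        mul_smul_comm, mul_assoc]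

lemma exists_ι_mul_ιProd_eq_smul [LinearOrder κ] (hv : Pairwise fun i j => Q.IsOrtho (v i) (v j))
    (j : κ) {l : List κ} (hl : l.Pairwise (· < ·)) :
    ∃ (c : R) (l' : List κ), l'.Pairwise (· < ·) ∧ l' ⊆ j :: l ∧
      ι Q (v j) * ιProd Q v l = c • ιProd Q v l' := by
  induction l with
  | nil => exact ⟨1, [j], List.pairwise_singleton _ j, by simp, by simp⟩
  | cons a l ih =>
    obtain ⟨hhead, htail⟩ := List.pairwise_cons.mp hl
    rcases lt_trichotomy j a with hja | rfl | haj
    · refine ⟨1, j :: a :: l, ?_, List.Subset.refl _, by simp⟩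
      exact List.pairwise_cons.mpr ⟨by grind, hl⟩
    · refine ⟨Q (v j), l, htail, by grind, ?_⟩
      rw [ιProd_cons, ← mul_assoc, ι_sq_scalar, ← Algebra.smul_def]
    · obtain ⟨c, l', hl', hsub, heq⟩ := ih htail
      refine ⟨-c, a :: l', List.pairwise_cons.mpr ⟨by grind, hl'⟩, by grind, ?_⟩
      rw [ιProd_cons, ι_mul_ι_mul_of_isOrtho _ (hv haj.ne'), heq, ιProd_cons, mul_smul_comm,
        neg_smul]

lemma span_ιProd_sorted_eq_top [LinearOrder κ] (hv : Pairwise fun i j => Q.IsOrtho (v i) (v j))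
    (hspan : Submodule.span R (Set.range v) = ⊤) :
    Submodule.span R {x | ∃ l : List κ, l.Pairwise (· < ·) ∧ ιProd Q v l = x} = ⊤ := by
  set S := Submodule.span R {x | ∃ l : List κ, l.Pairwise (· < ·) ∧ ιProd Q v l = x}
  have hιv (j : κ) : ∀ z ∈ S, ι Q (v j) * z ∈ S := by
    intro z hz
    induction hz using Submodule.span_induction with
    | mem _ h =>
      obtain ⟨l, hl, rfl⟩ := h
      obtain ⟨c, l', hl', -, heq⟩ := exists_ι_mul_ιProd_eq_smul hv j hl
      exact heq ▸ S.smul_mem c (Submodule.subset_span ⟨l', hl', rfl⟩)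
    | zero => simp
    | add x y _ _ hx hy => exact mul_add (ι Q (v j)) x y ▸ S.add_mem hx hy
    | smul c x _ hx => exact (mul_smul_comm c _ x).symm ▸ S.smul_mem c hx
  have hι (m : M) : ∀ z ∈ S, ι Q m * z ∈ S := by
    have hm : m ∈ Submodule.span R (Set.range v) := hspan ▸ Submodule.mem_top
    induction hm using Submodule.span_induction with
    | mem _ h => obtain ⟨j, rfl⟩ := h; exact hιv j
    | zero => simp
    | add x y _ _ hx hy => intro z hz; simpa [add_mul] using S.add_mem (hx z hz) (hy z hz)
    | smul c x _ hx => intro z hz; simpa using S.smul_mem c (hx z hz)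
  have hmul (y : CliffordAlgebra Q) : ∀ z ∈ S, y * z ∈ S := by
    induction y using CliffordAlgebra.induction with
    | algebraMap r => intro z hz; simpa [← Algebra.smul_def] using S.smul_mem r hz
    | ι m => exact hι m
    | mul y₁ y₂ h₁ h₂ => intro z hz; simpa [mul_assoc] using h₁ _ (h₂ z hz)
    | add y₁ y₂ h₁ h₂ => intro z hz; simpa [add_mul] using S.add_mem (h₁ z hz) (h₂ z hz)
  refine eq_top_iff.mpr fun x _ => ?_
  simpa using hmul x 1 (Submodule.subset_span ⟨[], List.Pairwise.nil, rfl⟩)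

lemma mem_center_of_forall_ι_mul_eq (hspan : Submodule.span R (Set.range v) = ⊤)
    {z : CliffordAlgebra Q} (hz : ∀ i, ι Q (v i) * z = z * ι Q (v i)) :
    z ∈ Subalgebra.center R (CliffordAlgebra Q) := by
  have hι : ∀ m, ι Q m * z = z * ι Q m := LinearMap.congr_fun <|
    LinearMap.ext_on_range (f := LinearMap.mulRight R z ∘ₗ ι Q)
      (g := LinearMap.mulLeft R z ∘ₗ ι Q) hspan hz
  have hcentralizer : Algebra.adjoin R (Set.range (ι Q)) ≤ Subalgebra.centralizer R {z} :=
    Algebra.adjoin_le <| by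
      rintro _ ⟨m, rfl⟩
      exact (Subalgebra.mem_centralizer_iff R).mpr fun g hg => hg ▸ (hι m).symm
  rw [adjoin_range_ι] at hcentralizer
  exact Subalgebra.mem_center_iff.mpr fun y =>
    ((Subalgebra.mem_centralizer_iff R).mp (hcentralizer Algebra.mem_top) z rfl).symm

lemma ιProd_finRange_mem_center {n : ℕ} {v : Fin n → M}
    (hv : Pairwise fun i j => Q.IsOrtho (v i) (v j)) (hspan : Submodule.span R (Set.range v) = ⊤)
    (hn : Odd n) : ιProd Q v (List.finRange n) ∈ Subalgebra.center R (CliffordAlgebra Q) := by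
  refine mem_center_of_forall_ι_mul_eq hspan fun i => ?_
  have hcount := List.countP_ne_add_one_eq_length (List.nodup_finRange n) (List.mem_finRange i)
  rw [List.length_finRange] at hcount
  obtain ⟨m, hm⟩ := hn
  rw [ι_mul_ιProd hv, Even.neg_one_pow ⟨m, by omega⟩, one_smul]

end CommRing

section Field

variable {k M κ : Type*} [Field k] [AddCommGroup M] [Module k M]
  (Q : QuadraticForm k M) (v : κ → M)

/-- `x ↦ (x + eᵢ x eᵢ⁻¹) / 2` with `eᵢ = ι Q (v i)`, whose inverse is `Q (v i)⁻¹ • eᵢ`. -/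
noncomputable def conjAverage (i : κ) : Module.End k (CliffordAlgebra Q) :=
  (2⁻¹ : k) • (LinearMap.id +
    (Q (v i))⁻¹ • LinearMap.mulLeft k (ι Q (v i)) ∘ₗ LinearMap.mulRight k (ι Q (v i)))

variable {Q v}

lemma conjAverage_apply_of_ι_mul_eq {i : κ} (hQ : Q (v i) ≠ 0) {x : CliffordAlgebra Q} {c : k}
    (hx : ι Q (v i) * x = c • (x * ι Q (v i))) :
    conjAverage Q v i x = (2⁻¹ * (1 + c)) • x := by
  have hconj : ι Q (v i) * (x * ι Q (v i)) = (c * Q (v i)) • x := by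
    rw [← mul_assoc, hx, smul_mul_assoc, mul_assoc, ι_sq_scalar, ← Algebra.commutes,
      ← Algebra.smul_def, smul_smul]
  simp only [conjAverage, LinearMap.smul_apply, LinearMap.add_apply, LinearMap.id_apply,
    LinearMap.comp_apply, LinearMap.mulLeft_apply, LinearMap.mulRight_apply, hconj, smul_smul]
  rw [mul_comm c, inv_mul_cancel_left₀ hQ, mul_smul, add_smul, one_smul]

lemma conjAverage_of_mem_center (hchar : (2 : k) ≠ 0) {i : κ} (hQ : Q (v i) ≠ 0)
    {x : CliffordAlgebra Q} (hx : x ∈ Subalgebra.center k (CliffordAlgebra Q)) :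
    conjAverage Q v i x = x := by
  have hcomm : ι Q (v i) * x = (1 : k) • (x * ι Q (v i)) := by
    rw [one_smul, Subalgebra.mem_center_iff.mp hx]
  rw [conjAverage_apply_of_ι_mul_eq hQ hcomm, one_add_one_eq_two, inv_mul_cancel₀ hchar,
    one_smul]

lemma conjAverage_ιProd [DecidableEq κ] (hv : Pairwise fun i j => Q.IsOrtho (v i) (v j))
    (hchar : (2 : k) ≠ 0) {i : κ} (hQ : Q (v i) ≠ 0) (l : List κ) :
    conjAverage Q v i (ιProd Q v l) = if Even (l.countP (· ≠ i)) then ιProd Q v l else 0 := by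
  rw [conjAverage_apply_of_ι_mul_eq hQ (ι_mul_ιProd hv i l)]
  split_ifs with h
  · rw [h.neg_one_pow, one_add_one_eq_two, inv_mul_cancel₀ hchar, one_smul]
  · rw [(Nat.not_even_iff_odd.mp h).neg_one_pow, add_neg_cancel, mul_zero, zero_smul]

lemma list_prod_conjAverage_of_mem_center (hchar : (2 : k) ≠ 0) (hQ : ∀ i, Q (v i) ≠ 0)
    {x : CliffordAlgebra Q} (hx : x ∈ Subalgebra.center k (CliffordAlgebra Q)) (L : List κ) :
    (L.map (conjAverage Q v)).prod x = x := by
  induction L with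
  | nil => rfl
  | cons i L ih =>
    rw [List.map_cons, List.prod_cons, Module.End.mul_apply, ih,
      conjAverage_of_mem_center hchar (hQ i) hx]

lemma list_prod_conjAverage_ιProd [DecidableEq κ]
    (hv : Pairwise fun i j => Q.IsOrtho (v i) (v j)) (hchar : (2 : k) ≠ 0)
    (hQ : ∀ i, Q (v i) ≠ 0) (L l : List κ) :
    (L.map (conjAverage Q v)).prod (ιProd Q v l) =
      if ∀ i ∈ L, Even (l.countP (· ≠ i)) then ιProd Q v l else 0 := by
  induction L with
  | nil => simp
  | cons i L ih =>
    rw [List.map_cons, List.prod_cons, Module.End.mul_apply, ih]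
    split_ifs with hL hiL hiL
    · rw [conjAverage_ιProd hv hchar (hQ i), if_pos (hiL i List.mem_cons_self)]
    · rw [conjAverage_ιProd hv hchar (hQ i),
        if_neg fun hi => hiL (List.forall_mem_cons.mpr ⟨hi, hL⟩)]
    · exact absurd (fun j hj => hiL j (List.mem_cons_of_mem i hj)) hL
    · exact map_zero _

lemma mem_span_ιProd_even_of_mem_center [LinearOrder κ] [Fintype κ]
    (hv : Pairwise fun i j => Q.IsOrtho (v i) (v j)) (hspan : Submodule.span k (Set.range v) = ⊤)
    (hchar : (2 : k) ≠ 0) (hQ : ∀ i, Q (v i) ≠ 0) {x : CliffordAlgebra Q}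
    (hx : x ∈ Subalgebra.center k (CliffordAlgebra Q)) :
    x ∈ Submodule.span k {y | ∃ l : List κ, l.Pairwise (· < ·) ∧
      (∀ i, Even (l.countP (· ≠ i))) ∧ ιProd Q v l = y} := by
  set P := ((Finset.univ : Finset κ).toList.map (conjAverage Q v)).prod
  have hP : Submodule.span k {y | ∃ l : List κ, l.Pairwise (· < ·) ∧ ιProd Q v l = y} ≤
      (Submodule.span k {y | ∃ l : List κ, l.Pairwise (· < ·) ∧
        (∀ i, Even (l.countP (· ≠ i))) ∧ ιProd Q v l = y}).comap P := by
    refine Submodule.span_le.mpr ?_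
    rintro _ ⟨l, hl, rfl⟩
    rw [SetLike.mem_coe, Submodule.mem_comap, list_prod_conjAverage_ιProd hv hchar hQ]
    split_ifs with heven
    · exact Submodule.subset_span ⟨l, hl, fun i => heven i (by simp), rfl⟩
    · exact zero_mem _
  rw [← list_prod_conjAverage_of_mem_center hchar hQ hx]
  exact hP (span_ιProd_sorted_eq_top hv hspan ▸ Submodule.mem_top)

lemma mem_span_one_ιProd_finRange_of_mem_center {n : ℕ} {v : Fin n → M}
    (hv : Pairwise fun i j => Q.IsOrtho (v i) (v j)) (hspan : Submodule.span k (Set.range v) = ⊤)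
    (hchar : (2 : k) ≠ 0) (hQ : ∀ i, Q (v i) ≠ 0) {x : CliffordAlgebra Q}
    (hx : x ∈ Subalgebra.center k (CliffordAlgebra Q)) :
    x ∈ Submodule.span k ({1} ∪ {y | Odd n ∧ y = ιProd Q v (List.finRange n)}) := by
  refine Submodule.span_mono ?_ (mem_span_ιProd_even_of_mem_center hv hspan hchar hQ hx)
  rintro _ ⟨l, hl, heven, rfl⟩
  rcases eq_nil_or_eq_finRange_of_forall_even_countP_ne hl heven with rfl | ⟨hn, rfl⟩
  · exact Or.inl rfl
  · exact Or.inr ⟨hn, rfl⟩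

end Field
end CliffordAlgebra

/-- The center of the Clifford algebra of an `n`-dimensional quadratic space with
orthogonal basis `v₁, …, v_n` (all `Q(v_i) ≠ 0`) over a field of characteristic `≠ 2`:
it is `k·1` if `n` is even, and `k·1 + k·δ` with `δ = ι(v₁)⋯ι(v_n)` if `n` is odd. -/
theorem clifford_center {k V : Type*} [Field k] [AddCommGroup V] [Module k V]
    (hchar : (2 : k) ≠ 0)
    (Q : QuadraticForm k V)
    (n : ℕ) (b : Module.Basis (Fin n) k V)
    (horth : ∀ i j, i ≠ j → QuadraticMap.polar Q (b i) (b j) = 0)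
    (hQ : ∀ i, Q (b i) ≠ 0) :
    (Even n → ∀ x : CliffordAlgebra Q,
      x ∈ Subalgebra.center k (CliffordAlgebra Q) ↔
        ∃ a : k, x = algebraMap k (CliffordAlgebra Q) a) ∧
    (Odd n → ∀ x : CliffordAlgebra Q,
      x ∈ Subalgebra.center k (CliffordAlgebra Q) ↔
        ∃ a c : k, x = algebraMap k (CliffordAlgebra Q) a +
          c • (List.ofFn fun i => CliffordAlgebra.ι Q (b i)).prod) := by
  have hv : Pairwise fun i j => Q.IsOrtho (b i) (b j) := fun i j hij =>
    QuadraticMap.isOrtho_polarBilin.mp (horth i j hij)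
  have hcenter {x : CliffordAlgebra Q} (hx : x ∈ Subalgebra.center k (CliffordAlgebra Q)) :=
    mem_span_one_ιProd_finRange_of_mem_center hv b.span_eq hchar hQ hx
  rw [show (List.ofFn fun i => ι Q (b i)).prod = ιProd Q b (List.finRange n) by
    rw [ιProd, List.ofFn_eq_map]]
  refine ⟨fun he x => ⟨fun hx => ?_, ?_⟩, fun ho x => ⟨fun hx => ?_, ?_⟩⟩
  · have hx' := hcenter hx
    simp only [Nat.not_odd_iff_even.mpr he, false_and, Set.ofPred_false, Set.union_empty] at hx'
    obtain ⟨a, rfl⟩ := Submodule.mem_span_singleton.mp hx'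
    exact ⟨a, (Algebra.algebraMap_eq_smul_one a).symm⟩
  · rintro ⟨a, rfl⟩
    exact Subalgebra.algebraMap_mem _ a
  · have hx' := hcenter hx
    simp only [ho, true_and, Set.ofPred_eq_eq_singleton, Set.singleton_union] at hx'
    obtain ⟨a, c, rfl⟩ := Submodule.mem_span_pair.mp hx'
    exact ⟨a, c, by rw [Algebra.algebraMap_eq_smul_one]⟩
  · rintro ⟨a, c, rfl⟩
    exact add_mem (Subalgebra.algebraMap_mem _ a)
      (Subalgebra.smul_mem _ (ιProd_finRange_mem_center hv b.span_eq ho) c)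
end

section
/- Let k be a field of characteristic ≠ 2 and (V,Q) an n-dimensional quadratic space over k admitting a basis v₁, …, v_n with B(v_i, v_j) = 0 for i ≠ j and Q(v_i) ≠ 0 for all i. Set δ = ι(v₁)⋯ι(v_n) in the Clifford algebra C_V, and let C_V⁰ be the even Clifford algebra. If n is even (so that δ ∈ C_V⁰), the center of C_V⁰ equals k·1 + k·δ (the k-span of 1 and δ); if n is odd, the center of C_V⁰ equals k·1. -/
/-!
Write `fᵢ = ι(bᵢ)`. The `fᵢ` anticommute pairwise and square to the nonzero scalars `Q(bᵢ)`, so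
the blades `e_S = ∏_{i ∈ S} fᵢ` (ordered products) span `C_V`, and conjugation by `fᵢ fⱼ` acts
on `e_S` by `-1` exactly when `S` contains one of `i, j` but not the other. A central element `x`
of `C_V⁰` commutes with every `fᵢ fⱼ`, so it is fixed by the projection `(1 + conj_{fᵢ fⱼ}) / 2`,
which kills the blades separating `i` from `j`; doing this for all pairs leaves `x` in the span of
`e_∅ = 1` and `e_{univ} = δ`. For even `n`, `δ` anticommutes with every vector and hence commutes
with `C_V⁰`; for odd `n`, `δ` is odd and invertible, so its coefficient in an even element
vanishes.
-/

open Finset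

namespace AnticommutingFamily

section Monoid

variable {A ι : Type*} [Monoid A] [LinearOrder ι] (f : ι → A)

noncomputable def blade (S : Finset ι) : A := ((S.sort).map f).prod

@[simp]
theorem blade_empty : blade f ∅ = 1 := by simp [blade]

theorem blade_insert_of_lt {a : ι} {S : Finset ι} (h : ∀ b ∈ S, a < b) :
    blade f (insert a S) = f a * blade f S := by
  rw [blade, blade, sort_insert _ (fun b hb => (h b hb).le) fun ha => (h a ha).false,
    List.map_cons, List.prod_cons]

theorem blade_univ {n : ℕ} (f : Fin n → A) : blade f univ = (List.ofFn f).prod := by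
  rw [blade, Fin.sort_univ, List.ofFn_eq_map]

theorem isUnit_blade {f : ι → A} (hf : ∀ i, IsUnit (f i)) (S : Finset ι) : IsUnit (blade f S) :=
  List.prod_isUnit fun _ hx => by
    obtain ⟨i, -, rfl⟩ := List.mem_map.mp hx
    exact hf i

end Monoid

section CommRing

variable {k A ι : Type*} [CommRing k] [Ring A] [Algebra k A] [LinearOrder ι] (f : ι → A)

theorem mul_blade_eq_smul (x : A) (c : ι → k) (S : Finset ι)
    (h : ∀ j ∈ S, x * f j = c j • (f j * x)) :
    x * blade f S = (∏ j ∈ S, c j) • (blade f S * x) := by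
  induction S using Finset.induction_on_min with
  | empty => simp
  | insert a S haS ih =>
    have ha : a ∉ S := fun ha => (haS a ha).false
    rw [blade_insert_of_lt f haS, prod_insert ha, ← mul_assoc, h a (mem_insert_self a S),
      smul_mul_assoc, mul_assoc, ih fun j hj => h j (mem_insert_of_mem hj), mul_smul_comm,
      smul_smul, mul_assoc]

variable {f} {q : ι → k} (hanti : Pairwise fun i j => f i * f j = -(f j * f i))
  (hsq : ∀ i, f i * f i = algebraMap k A (q i))

include hanti in
theorem generator_mul_generator (i l : ι) :
    f i * f l = (if l = i then 1 else -1 : k) • (f l * f i) := by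
  split_ifs with h
  · rw [h, one_smul]
  · rw [hanti (Ne.symm h), neg_one_smul]

include hanti in
theorem generator_mul_blade (i : ι) (S : Finset ι) :
    f i * blade f S = ((-1) ^ #S * if i ∈ S then -1 else 1 : k) • (blade f S * f i) := by
  rw [mul_blade_eq_smul f _ _ S fun l _ => generator_mul_generator (k := k) hanti i l]
  congr 1
  rw [show (fun l => if l = i then (1 : k) else -1) = fun l => -(if l = i then -1 else 1) by
    ext; split_ifs <;> simp, prod_neg, prod_ite_eq']

include hanti in
theorem pair_mul_blade (i j : ι) (S : Finset ι) :
    (f i * f j) * blade f S =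
      ((if i ∈ S then -1 else 1) * (if j ∈ S then -1 else 1) : k) • (blade f S * (f i * f j)) := by
  rw [mul_assoc, generator_mul_blade (k := k) hanti, mul_smul_comm, ← mul_assoc,
    generator_mul_blade (k := k) hanti, smul_mul_assoc, smul_smul, mul_assoc (blade f S)]
  congr 1
  split_ifs <;> ring_nf <;> simp

include hanti hsq in
theorem exists_generator_mul_blade (i : ι) (S : Finset ι) :
    ∃ (c : k) (T : Finset ι), T ⊆ insert i S ∧ f i * blade f S = c • blade f T := by
  induction S using Finset.induction_on_min with
  | empty => exact ⟨1, {i}, subset_rfl, by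
    rw [blade_empty, mul_one, one_smul, ← insert_empty, blade_insert_of_lt f (by simp), blade_empty,
      mul_one]⟩
  | insert a S haS ih =>
    rw [blade_insert_of_lt f haS]
    rcases lt_trichotomy i a with hia | rfl | hai
    · have hi : ∀ b ∈ insert a S, i < b := by
        simpa [hia] using fun b hb => hia.trans (haS b hb)
      exact ⟨1, insert i (insert a S), subset_rfl, by
        rw [blade_insert_of_lt f hi, blade_insert_of_lt f haS, one_smul]⟩
    · exact ⟨q i, S, (subset_insert _ _).trans (subset_insert _ _), by
        rw [← mul_assoc, hsq, ← Algebra.smul_def]⟩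
    · -- `T ⊆ insert i S` keeps the product ordered when `f a` is put back in front
      obtain ⟨c, T, hT, hmul⟩ := ih
      have ha : ∀ b ∈ T, a < b := fun b hb => by
        rcases mem_insert.mp (hT hb) with rfl | hb
        exacts [hai, haS b hb]
      refine ⟨-c, insert a T, insert_subset_iff.mpr ⟨by simp, hT.trans ?_⟩, ?_⟩
      · exact insert_subset_insert i (subset_insert a S)
      · rw [← mul_assoc, hanti hai.ne', neg_mul, mul_assoc, hmul, mul_smul_comm,
          ← blade_insert_of_lt f ha, neg_smul]

omit [LinearOrder ι] in
include hsq in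
theorem pair_mul_pair_swap (i j : ι) :
    (f i * f j) * (f j * f i) = algebraMap k A (q i * q j) := by
  rw [mul_assoc, ← mul_assoc (f j), hsq, Algebra.commutes, ← mul_assoc, hsq, map_mul]

end CommRing

section Field

variable {k A ι : Type*} [Field k] [Ring A] [Algebra k A] [LinearOrder ι] {f : ι → A} {q : ι → k}
  (hanti : Pairwise fun i j => f i * f j = -(f j * f i))
  (hsq : ∀ i, f i * f i = algebraMap k A (q i))

include hanti hsq in
theorem mem_span_blade_sep_of_commute (h2 : (2 : k) ≠ 0) {i j : ι} (hi : q i ≠ 0) (hj : q j ≠ 0)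
    {𝒮 : Set (Finset ι)} {x : A} (hx : x ∈ Submodule.span k (blade f '' 𝒮))
    (hcomm : Commute (f i * f j) x) :
    x ∈ Submodule.span k (blade f '' {S ∈ 𝒮 | i ∈ S ↔ j ∈ S}) := by
  -- `P y = (y + (f i * f j) * y * (f i * f j)⁻¹) / 2` fixes `x` and sends each blade to itself
  -- or to `0`
  set P : A →ₗ[k] A := (2 * (q i * q j))⁻¹ •
    (LinearMap.mulLeftRight k (f i * f j, f j * f i) + (q i * q j) • LinearMap.id)
  have hPx : P x = x := by
    simp only [P, LinearMap.smul_apply, LinearMap.add_apply, LinearMap.mulLeftRight_apply,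
      LinearMap.id_apply, hcomm.eq, mul_assoc x, pair_mul_pair_swap (k := k) hsq,
      ← Algebra.commutes, ← Algebra.smul_def, ← add_smul, smul_smul]
    rw [← two_mul, inv_mul_cancel₀ (mul_ne_zero h2 (mul_ne_zero hi hj)), one_smul]
  have hP : ∀ S, P (blade f S) = (if i ∈ S ↔ j ∈ S then 1 else 0 : k) • blade f S := by
    intro S
    simp only [P, LinearMap.smul_apply, LinearMap.add_apply, LinearMap.mulLeftRight_apply,
      LinearMap.id_apply, pair_mul_blade (k := k) hanti, smul_mul_assoc, mul_assoc (blade f S),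
      pair_mul_pair_swap (k := k) hsq, ← Algebra.commutes, ← Algebra.smul_def, smul_smul,
      ← add_smul]
    congr 1
    by_cases hiS : i ∈ S <;> by_cases hjS : j ∈ S <;> simp [hiS, hjS] <;> field_simp <;> ring
  rw [← hPx]
  refine (Submodule.map_span_le P _ _).mpr ?_ (Submodule.mem_map_of_mem hx)
  rintro _ ⟨S, hS, rfl⟩
  rw [hP]
  split_ifs with h
  · exact Submodule.smul_mem _ _ (Submodule.subset_span ⟨S, ⟨hS, h⟩, rfl⟩)
  · rw [zero_smul]
    exact Submodule.zero_mem _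

include hanti hsq in
theorem mem_span_one_blade_univ_of_commute [Fintype ι] (h2 : (2 : k) ≠ 0) (hq : ∀ i, q i ≠ 0)
    {x : A} (hx : x ∈ Submodule.span k (Set.range (blade f)))
    (hcomm : ∀ i j, Commute (f i * f j) x) :
    x ∈ Submodule.span k {1, blade f univ} := by
  have hpairs : ∀ P : Finset (ι × ι),
      x ∈ Submodule.span k (blade f '' {S | ∀ p ∈ P, p.1 ∈ S ↔ p.2 ∈ S}) := by
    intro P
    induction P using Finset.induction_on with
    | empty => simpa using hx
    | insert p P _ ih =>
      convert mem_span_blade_sep_of_commute hanti hsq h2 (hq p.1) (hq p.2) ih (hcomm p.1 p.2)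
        using 4
      ext S
      simp [and_comm]
  refine Submodule.span_mono ?_ (hpairs univ)
  rintro _ ⟨S, hS, rfl⟩
  obtain rfl | ⟨i, hi⟩ := S.eq_empty_or_nonempty
  · exact Or.inl (blade_empty f)
  · refine Or.inr (congrArg _ (eq_univ_of_forall fun j => ?_))
    exact (hS (i, j) (mem_univ _)).mp hi

end Field

end AnticommutingFamily

namespace CliffordAlgebra

open AnticommutingFamily

section CommRing

variable {k V : Type*} [CommRing k] [AddCommGroup V] [Module k V] (Q : QuadraticForm k V)

theorem involute_blade {I : Type*} [LinearOrder I] (g : I → V) (S : Finset I) :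
    involute (blade (fun i => ι Q (g i)) S) = (-1 : k) ^ #S • blade (fun i => ι Q (g i)) S := by
  rw [blade, ← Function.comp_def (ι Q), ← List.map_map, involute_prod_map_ι, List.length_map,
    length_sort, List.map_map, Function.comp_def]

variable {n : ℕ} (b : Module.Basis (Fin n) k V)

theorem ι_basis_anticomm (horth : ∀ i j, i ≠ j → QuadraticMap.polar Q (b i) (b j) = 0) :
    Pairwise fun i j => ι Q (b i) * ι Q (b j) = -(ι Q (b j) * ι Q (b i)) := fun i j h =>
  eq_neg_of_add_eq_zero_left (by rw [ι_mul_ι_add_swap, horth i j h, map_zero])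

variable {Q b}
variable (hanti : Pairwise fun i j => ι Q (b i) * ι Q (b j) = -(ι Q (b j) * ι Q (b i)))

include hanti in
theorem mem_span_blade (x : CliffordAlgebra Q) :
    x ∈ Submodule.span k (Set.range (blade fun i => ι Q (b i))) := by
  induction x using CliffordAlgebra.left_induction with
  | algebraMap r =>
    rw [Algebra.algebraMap_eq_smul_one, ← blade_empty fun i => ι Q (b i)]
    exact Submodule.smul_mem _ _ (Submodule.subset_span ⟨∅, rfl⟩)
  | add x y hx hy => exact Submodule.add_mem _ hx hy
  | ι_mul x m hx =>
    refine (Submodule.span_le (p := (Submodule.span k _).comap (LinearMap.mulLeft k (ι Q m)))).mpr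
      ?_ hx
    rintro _ ⟨S, rfl⟩
    simp only [SetLike.mem_coe, Submodule.mem_comap, LinearMap.mulLeft_apply]
    rw [← b.sum_repr m, map_sum, Finset.sum_mul]
    refine Submodule.sum_mem _ fun i _ => ?_
    obtain ⟨c, T, -, h⟩ := exists_generator_mul_blade hanti (fun i => ι_sq_scalar Q (b i)) i S
    rw [map_smul, smul_mul_assoc, h]
    exact Submodule.smul_mem _ _ (Submodule.smul_mem _ _ (Submodule.subset_span ⟨T, rfl⟩))

include hanti in
theorem ι_mul_blade_univ (hn : Even n) (m : V) :
    ι Q m * blade (fun i => ι Q (b i)) univ = -(blade (fun i => ι Q (b i)) univ * ι Q m) := by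
  rw [← b.sum_repr m, map_sum, Finset.sum_mul, Finset.mul_sum, ← Finset.sum_neg_distrib]
  refine Finset.sum_congr rfl fun i _ => ?_
  rw [map_smul, smul_mul_assoc, generator_mul_blade (k := k) hanti, if_pos (Finset.mem_univ i),
    Finset.card_univ, Fintype.card_fin, hn.neg_one_pow, one_mul, neg_one_smul, smul_neg,
    mul_smul_comm]

include hanti in
theorem commute_blade_univ_of_mem_even (hn : Even n) {y : CliffordAlgebra Q}
    (hy : y ∈ evenOdd Q 0) : Commute (blade (fun i => ι Q (b i)) univ) y := by
  induction y, hy using CliffordAlgebra.even_induction with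
  | algebraMap r => exact Algebra.commute_algebraMap_right r _
  | add x y _ _ hx hy => exact hx.add_right hy
  | ι_mul_ι_mul m₁ m₂ x _ hx =>
    have h (m : V) : blade (fun i => ι Q (b i)) univ * ι Q m =
        -(ι Q m * blade (fun i => ι Q (b i)) univ) := by
      rw [ι_mul_blade_univ hanti hn, neg_neg]
    refine Commute.mul_right ?_ hx
    rw [Commute, SemiconjBy, ← mul_assoc, h, neg_mul, mul_assoc, h, mul_neg, neg_neg, mul_assoc]

end CommRing

variable {k V : Type*} [Field k] [AddCommGroup V] [Module k V] {Q : QuadraticForm k V} {n : ℕ}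
  {b : Module.Basis (Fin n) k V}

theorem eq_zero_of_add_smul_blade_univ_mem_even (hchar : (2 : k) ≠ 0) (hQ : ∀ i, Q (b i) ≠ 0)
    (hn : Odd n) {a c : k}
    (h : algebraMap k _ a + c • blade (fun i => ι Q (b i)) univ ∈ evenOdd Q 0) : c = 0 := by
  have h' := involute_eq_of_mem_even h
  rw [map_add, AlgHom.commutes, map_smul, involute_blade, card_univ, Fintype.card_fin,
    hn.neg_one_pow, neg_one_smul, add_right_inj, smul_neg, neg_eq_iff_add_eq_zero, ← two_smul k,
    smul_smul, smul_eq_zero] at h'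
  have hδ : IsUnit (blade (fun i => ι Q (b i)) univ) :=
    isUnit_blade (fun i => isUnit_ι_of_isUnit Q (hQ i).isUnit) univ
  -- makes `CliffordAlgebra Q` nontrivial, so units are nonzero
  have : Invertible (2 : k) := invertibleOfNonzero hchar
  exact (mul_eq_zero.mp (h'.resolve_right hδ.ne_zero)).resolve_left hchar

end CliffordAlgebra

open AnticommutingFamily CliffordAlgebra in
/-- The center of the even Clifford algebra of an `n`-dimensional quadratic space with
orthogonal basis `v₁, …, v_n` (all `Q(v_i) ≠ 0`) over a field of characteristic `≠ 2`:
it is `k·1 + k·δ` with `δ = ι(v₁)⋯ι(v_n)` if `n` is even, and `k·1` if `n` is odd. -/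
theorem even_clifford_center {k V : Type*} [Field k] [AddCommGroup V] [Module k V]
    (hchar : (2 : k) ≠ 0)
    (Q : QuadraticForm k V)
    (n : ℕ) (b : Module.Basis (Fin n) k V)
    (horth : ∀ i j, i ≠ j → QuadraticMap.polar Q (b i) (b j) = 0)
    (hQ : ∀ i, Q (b i) ≠ 0) :
    (Even n → ∀ x ∈ CliffordAlgebra.even Q,
      ((∀ y ∈ CliffordAlgebra.even Q, x * y = y * x) ↔
        ∃ a c : k, x = algebraMap k (CliffordAlgebra Q) a +
          c • (List.ofFn fun i => CliffordAlgebra.ι Q (b i)).prod)) ∧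
    (Odd n → ∀ x ∈ CliffordAlgebra.even Q,
      ((∀ y ∈ CliffordAlgebra.even Q, x * y = y * x) ↔
        ∃ a : k, x = algebraMap k (CliffordAlgebra Q) a)) := by
  simp only [← blade_univ]
  have hanti := ι_basis_anticomm Q b horth
  have center (x : CliffordAlgebra Q) (hx : ∀ y ∈ even Q, x * y = y * x) :
      ∃ a c : k, x = algebraMap k _ a + c • blade (fun i => ι Q (b i)) univ := by
    have hx' := mem_span_one_blade_univ_of_commute hanti (fun i => ι_sq_scalar Q (b i)) hchar hQ
      (mem_span_blade hanti x) fun i j => (hx _ (ι_mul_ι_mem_evenOdd_zero Q _ _)).symm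
    obtain ⟨a, c, h⟩ := Submodule.mem_span_pair.mp hx'
    exact ⟨a, c, by rw [← h, Algebra.algebraMap_eq_smul_one]⟩
  refine ⟨fun hn x _ => ⟨center x, ?_⟩, fun hn x hx => ⟨fun hcen => ?_, ?_⟩⟩
  · rintro ⟨a, c, rfl⟩ y hy
    rw [add_mul, mul_add, Algebra.commutes, smul_mul_assoc, mul_smul_comm,
      (commute_blade_univ_of_mem_even hanti hn hy).eq]
  · obtain ⟨a, c, rfl⟩ := center x hcen
    rw [eq_zero_of_add_smul_blade_univ_mem_even hchar hQ hn hx, zero_smul, add_zero]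
    exact ⟨a, rfl⟩
  · rintro ⟨a, rfl⟩ y _
    exact Algebra.commutes a y
end

section
/- Let k be a field of characteristic ≠ 2 and (V,Q) a nondegenerate quadratic space over k with dim V ≤ 4. If x lies in the even Clifford algebra C_V⁰ and its Clifford norm is a nonzero scalar, N(x) = xᵗ·x = c·1 with c ∈ k^×, then x is invertible in C_V with x^{-1} = c^{-1}·xᵗ, and x·ι(V)·x^{-1} = ι(V) (so x belongs to the Clifford group, and hence GSpin_V = {x ∈ C_V⁰ : N(x) ∈ k^×}). -/
open CliffordAlgebra

section ContractLemmas

variable {R M : Type*} [CommRing R] [AddCommGroup M] [Module R M] {Q Q' : QuadraticForm R M}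

lemma aux_contractLeft_involute (d : Module.Dual R M) (z : CliffordAlgebra Q) :
    contractLeft (Q := Q) d (involute z) = - involute (contractLeft (Q := Q) d z) := by
  induction' z using CliffordAlgebra.left_induction with r x y hx hy m x hx
  · simp
  · simp only [map_add, hx, hy]; abel
  · rw [map_mul, involute_ι, neg_mul, map_neg, contractLeft_ι_mul, contractLeft_ι_mul, hx,
      map_sub, map_smul, map_mul, involute_ι]
    simp only [mul_neg, neg_mul, neg_sub, sub_eq_add_neg, neg_neg, neg_add]

lemma aux_contractLeft_mul_ι (d : Module.Dual R M) (m : M) (y : CliffordAlgebra Q) :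
    contractLeft (Q := Q) d (y * ι Q m)
      = contractLeft (Q := Q) d y * ι Q m + d m • involute y := by
  induction' y using CliffordAlgebra.left_induction with r x y' hx hy m' x hx
  · rw [contractLeft_algebraMap_mul, contractLeft_ι, contractLeft_algebraMap, zero_mul,
      zero_add, AlgHom.commutes, Algebra.smul_def, ← map_mul, ← map_mul, mul_comm]
  · simp only [add_mul, map_add, hx, hy, smul_add]; abel
  · rw [mul_assoc, contractLeft_ι_mul, hx, contractLeft_ι_mul]
    simp only [map_mul, involute_ι, mul_add, add_mul, sub_mul, smul_mul_assoc, mul_smul_comm,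
      neg_mul, mul_neg, smul_neg, sub_eq_add_neg, neg_add, neg_neg, mul_assoc]
    abel

lemma aux_contractRight_ι_mul (d : Module.Dual R M) (m : M) (z : CliffordAlgebra Q) :
    contractRight (Q := Q) (ι Q m * z) d
      = ι Q m * contractRight (Q := Q) z d + d m • involute z := by
  rw [contractRight_eq, reverse.map_mul, reverse_ι, aux_contractLeft_mul_ι, map_add,
    reverse.map_mul, reverse_ι, map_smul, reverse_involute, reverse_reverse,
    ← contractRight_eq]

lemma aux_contractLeft_contractRight (d d' : Module.Dual R M) (x : CliffordAlgebra Q) :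
    contractLeft (Q := Q) d (contractRight (Q := Q) x d')
      = contractRight (Q := Q) (contractLeft (Q := Q) d x) d' := by
  induction' x using CliffordAlgebra.left_induction with r x y hx hy m x hx
  · simp
  · simp only [map_add, LinearMap.add_apply, hx, hy]
  · rw [aux_contractRight_ι_mul, map_add, map_smul, contractLeft_ι_mul,
      aux_contractLeft_involute, contractLeft_ι_mul, map_sub, LinearMap.sub_apply, map_smul,
      LinearMap.smul_apply, aux_contractRight_ι_mul, hx]
    simp only [smul_neg, sub_eq_add_neg, neg_add, neg_neg]
    abel

end ContractLemmas
section ChangeFormLemmas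

variable {R M : Type*} [CommRing R] [AddCommGroup M] [Module R M] {Q Q' : QuadraticForm R M}
variable {B : LinearMap.BilinForm R M}

lemma aux_changeForm_mul_ι (h : B.toQuadraticMap = Q' - Q) (hB : ∀ a b, B a b = B b a)
    (m : M) (z : CliffordAlgebra Q) :
    changeForm h (z * ι Q m)
      = changeForm h z * ι Q' m - contractRight (Q := Q') (changeForm h z) (B m) := by
  induction' z using CliffordAlgebra.left_induction with r z₁ z₂ h1 h2 w m' hw
  · rw [Algebra.commutes, changeForm_ι_mul, changeForm_algebraMap, contractLeft_algebraMap,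
      contractRight_algebraMap, sub_zero, sub_zero, Algebra.commutes]
  · simp only [add_mul, map_add, LinearMap.add_apply, h1, h2]; abel
  · rw [mul_assoc, changeForm_ι_mul, hw, changeForm_ι_mul]
    simp only [map_sub, LinearMap.sub_apply, mul_sub, sub_mul, aux_contractRight_ι_mul,
      aux_contractLeft_mul_ι, aux_contractLeft_contractRight, mul_assoc]
    rw [hB m' m]
    abel

lemma aux_changeForm_reverse (h : B.toQuadraticMap = Q' - Q) (hB : ∀ a b, B a b = B b a)
    (x : CliffordAlgebra Q) :
    changeForm h (reverse x) = reverse (changeForm h x) := by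
  induction' x using CliffordAlgebra.left_induction with r x y hx hy x m hx
  · simp
  · simp only [map_add, hx, hy]
  · rw [reverse.map_mul, reverse_ι, aux_changeForm_mul_ι h hB, hx, changeForm_ι_mul,
      map_sub, reverse.map_mul, reverse_ι, contractRight_eq, reverse_reverse]

end ChangeFormLemmas
section GradingLemmas

variable {R M : Type*} [CommRing R] [AddCommGroup M] [Module R M] {Q Q' : QuadraticForm R M}
variable {B : LinearMap.BilinForm R M}

lemma aux_range_pow_le_evenOdd (n : ℕ) :
    LinearMap.range (ι Q) ^ n ≤ evenOdd Q (n : ZMod 2) :=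
  le_iSup_of_le ⟨n, rfl⟩ le_rfl

lemma aux_contractLeft_pow_mem (d : Module.Dual R M) (n : ℕ) (x : CliffordAlgebra Q)
    (hx : x ∈ LinearMap.range (ι Q) ^ n) :
    contractLeft (Q := Q) d x ∈ evenOdd Q ((n : ZMod 2) + 1) := by
  induction hx using Submodule.pow_induction_on_left' with
  | algebraMap r => rw [contractLeft_algebraMap]; exact zero_mem _
  | add x y i hx hy ihx ihy => rw [map_add]; exact add_mem ihx ihy
  | mem_mul m hm i x hx ih =>
      obtain ⟨v, rfl⟩ := hm
      rw [contractLeft_ι_mul]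
      have h1 : d v • x ∈ evenOdd Q ((i : ZMod 2)) :=
        Submodule.smul_mem _ _ (aux_range_pow_le_evenOdd i hx)
      have h2 : ι Q v * contractLeft (Q := Q) d x ∈ evenOdd Q (1 + ((i : ZMod 2) + 1)) :=
        SetLike.mul_mem_graded (ι_mem_evenOdd_one Q v) ih
      have e1 : ((i + 1 : ℕ) : ZMod 2) + 1 = (i : ZMod 2) := by
        push_cast; generalize ((i : ZMod 2)) = a; revert a; decide
      have e2 : (1 + ((i : ZMod 2) + 1)) = (i : ZMod 2) := by
        generalize ((i : ZMod 2)) = a; revert a; decide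
      rw [e2] at h2
      rw [e1]
      exact sub_mem h1 h2

lemma aux_contractLeft_evenOdd (d : Module.Dual R M) (i : ZMod 2) (x : CliffordAlgebra Q)
    (hx : x ∈ evenOdd Q i) : contractLeft (Q := Q) d x ∈ evenOdd Q (i + 1) := by
  induction x, hx using evenOdd_induction with
  | range_ι_pow v hv =>
      have := aux_contractLeft_pow_mem d i.val v hv
      rwa [ZMod.natCast_zmod_val] at this
  | add x y hx hy ihx ihy => rw [map_add]; exact add_mem ihx ihy
  | ι_mul_ι_mul m₁ m₂ x hx ih =>
      rw [mul_assoc, contractLeft_ι_mul, contractLeft_ι_mul]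
      have h1 : d m₁ • (ι Q m₂ * x) ∈ evenOdd Q (1 + i) :=
        Submodule.smul_mem _ _ (SetLike.mul_mem_graded (ι_mem_evenOdd_one Q m₂) hx)
      have h2 : d m₂ • (ι Q m₁ * x) ∈ evenOdd Q (1 + i) :=
        Submodule.smul_mem _ _ (SetLike.mul_mem_graded (ι_mem_evenOdd_one Q m₁) hx)
      have h3 : ι Q m₁ * (ι Q m₂ * contractLeft (Q := Q) d x)
          ∈ evenOdd Q (1 + (1 + (i + 1))) :=
        SetLike.mul_mem_graded (ι_mem_evenOdd_one Q m₁)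
          (SetLike.mul_mem_graded (ι_mem_evenOdd_one Q m₂) ih)
      have e1 : (1 + i : ZMod 2) = i + 1 := add_comm _ _
      have e2 : (1 + (1 + (i + 1)) : ZMod 2) = i + 1 := by
        generalize i = a; revert a; decide
      rw [e1] at h1 h2; rw [e2] at h3
      rw [mul_sub, mul_smul_comm]
      exact sub_mem h1 (sub_mem h2 h3)

lemma aux_changeForm_odd (h : B.toQuadraticMap = Q' - Q) (x : CliffordAlgebra Q)
    (hx : x ∈ evenOdd Q 1) : changeForm h x ∈ evenOdd Q' 1 := by
  induction x, hx using odd_induction with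
  | ι v => rw [changeForm_ι]; exact ι_mem_evenOdd_one Q' v
  | add x y hx hy ihx ihy => rw [map_add]; exact add_mem ihx ihy
  | ι_mul_ι_mul m₁ m₂ x hx ih =>
      rw [mul_assoc, changeForm_ι_mul, changeForm_ι_mul]
      have ht : ι Q' m₂ * changeForm h x - contractLeft (Q := Q') (B m₂) (changeForm h x)
          ∈ evenOdd Q' 0 := by
        have h1 : ι Q' m₂ * changeForm h x ∈ evenOdd Q' (1 + 1) :=
          SetLike.mul_mem_graded (ι_mem_evenOdd_one Q' m₂) ih
        have h2 := aux_contractLeft_evenOdd (B m₂) 1 _ ih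
        rw [show (1 + 1 : ZMod 2) = 0 from by decide] at h1 h2
        exact sub_mem h1 h2
      have h3 : ι Q' m₁ * (ι Q' m₂ * changeForm h x
            - contractLeft (Q := Q') (B m₂) (changeForm h x)) ∈ evenOdd Q' (1 + 0) :=
        SetLike.mul_mem_graded (ι_mem_evenOdd_one Q' m₁) ht
      have h4 := aux_contractLeft_evenOdd (B m₁) 0 _ ht
      rw [show (1 + 0 : ZMod 2) = 1 from by decide] at h3
      rw [show (0 + 1 : ZMod 2) = 1 from by decide] at h4
      exact sub_mem h3 h4

end GradingLemmas
section Exterior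

variable {k V : Type*} [Field k] [AddCommGroup V] [Module k V] [FiniteDimensional k V]

lemma aux_anticomm (u w : V) :
    ι (0 : QuadraticForm k V) u * ι (0 : QuadraticForm k V) w
      = -(ι (0 : QuadraticForm k V) w * ι (0 : QuadraticForm k V) u) := by
  have := CliffordAlgebra.ι_mul_ι_add_swap (Q := (0 : QuadraticForm k V)) u w
  simp only [QuadraticMap.polar, QuadraticMap.zero_apply, sub_zero, zero_sub, neg_zero,
    map_zero, sub_self] at this
  exact eq_neg_of_add_eq_zero_left this

lemma aux_even2_comm (a : CliffordAlgebra (0 : QuadraticForm k V))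
    (ha : a ∈ LinearMap.range (ι (0 : QuadraticForm k V))
        * LinearMap.range (ι (0 : QuadraticForm k V))) (v : V) :
    a * ι (0 : QuadraticForm k V) v = ι (0 : QuadraticForm k V) v * a := by
  refine Submodule.mul_induction_on ha (fun x hx y hy => ?_) (fun x y hx hy => ?_)
  · obtain ⟨u, rfl⟩ := hx
    obtain ⟨w, rfl⟩ := hy
    rw [mul_assoc, aux_anticomm w v, mul_neg, ← mul_assoc, aux_anticomm u v, neg_mul,
      neg_neg, mul_assoc]
  · rw [add_mul, mul_add, hx, hy]

lemma aux_rev2 (a : CliffordAlgebra (0 : QuadraticForm k V))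
    (ha : a ∈ LinearMap.range (ι (0 : QuadraticForm k V))
        * LinearMap.range (ι (0 : QuadraticForm k V))) :
    reverse a = -a := by
  refine Submodule.mul_induction_on ha (fun x hx y hy => ?_) (fun x y hx hy => ?_)
  · obtain ⟨u, rfl⟩ := hx
    obtain ⟨w, rfl⟩ := hy
    rw [reverse.map_mul, reverse_ι, reverse_ι, aux_anticomm w u]
  · rw [map_add, hx, hy, neg_add]

lemma aux_rev3 (x : CliffordAlgebra (0 : QuadraticForm k V))
    (hx : x ∈ LinearMap.range (ι (0 : QuadraticForm k V)) ^ 3) :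
    reverse x = -x := by
  rw [pow_succ, pow_two] at hx
  refine Submodule.mul_induction_on hx (fun a ha b hb => ?_) (fun x y hx hy => ?_)
  · obtain ⟨v, rfl⟩ := hb
    rw [reverse.map_mul, reverse_ι, aux_rev2 a ha, mul_neg, ← aux_even2_comm a ha v]
  · rw [map_add, hx, hy, neg_add]

lemma aux_pow_eq_bot (n : ℕ) (hn : Module.finrank k V < n) :
    LinearMap.range (ι (0 : QuadraticForm k V)) ^ n = ⊥ := by
  show ⋀[k]^n V = ⊥
  rw [← ExteriorAlgebra.ιMulti_span_fixedDegree, Submodule.span_eq_bot]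
  rintro x ⟨v, rfl⟩
  refine AlternatingMap.map_linearDependent _ _ (fun hli => ?_)
  have := hli.fintype_card_le_finrank
  rw [Fintype.card_fin] at this
  omega

lemma aux_odd_le (hdim : Module.finrank k V ≤ 4) :
    evenOdd (0 : QuadraticForm k V) 1
      ≤ LinearMap.range (ι (0 : QuadraticForm k V))
          ⊔ LinearMap.range (ι (0 : QuadraticForm k V)) ^ 3 := by
  refine iSup_le ?_
  rintro ⟨n, hn⟩
  dsimp only
  have h5 : ∀ m : ℕ, LinearMap.range (ι (0 : QuadraticForm k V)) ^ (5 + m) = ⊥ := by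
    intro m; rw [pow_add, aux_pow_eq_bot 5 (by omega), Submodule.bot_mul]
  match n, hn with
  | 1, hn => rw [pow_one]; exact le_sup_left
  | 3, hn => exact le_sup_right
  | 0, hn => exact absurd hn (by decide)
  | 2, hn => exact absurd hn (by decide)
  | 4, hn => exact absurd hn (by decide)
  | (m+5), hn => rw [show m + 5 = 5 + m by omega, h5]; exact bot_le

lemma aux_fd_exterior : FiniteDimensional k (CliffordAlgebra (0 : QuadraticForm k V)) := by
  have hfg : ∀ n : ℕ, (LinearMap.range (ι (0 : QuadraticForm k V)) ^ n).FG := by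
    intro n
    apply Submodule.FG.pow
    rw [LinearMap.range_eq_map]
    exact (Module.finite_def.mp inferInstance).map _
  set d := Module.finrank k V with hd
  have htop : (⊤ : Submodule k (CliffordAlgebra (0 : QuadraticForm k V)))
      ≤ (Finset.range (d+1)).sup
          (fun n => LinearMap.range (ι (0 : QuadraticForm k V)) ^ n) := by
    rw [← iSup_ι_range_eq_top]
    refine iSup_le fun n => ?_
    rcases le_or_gt n d with hn | hn
    · exact Finset.le_sup (Finset.mem_range.mpr (by omega))
    · rw [aux_pow_eq_bot n hn]; exact bot_le
  refine Module.finite_def.mpr ?_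
  have heq : (⊤ : Submodule k (CliffordAlgebra (0 : QuadraticForm k V)))
      = (Finset.range (d+1)).sup
          (fun n => LinearMap.range (ι (0 : QuadraticForm k V)) ^ n) :=
    le_antisymm htop le_top
  rw [heq]
  exact Submodule.fg_finset_sup _ _ (fun i _ => hfg i)

lemma aux_fd_clifford (hchar : (2:k) ≠ 0) (Q : QuadraticForm k V) :
    FiniteDimensional k (CliffordAlgebra Q) := by
  haveI := invertibleOfNonzero hchar
  haveI := aux_fd_exterior (k := k) (V := V)
  exact Module.Finite.equiv (changeFormEquiv (changeForm.associated_neg_proof (Q := Q))).symm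

end Exterior
section Key

variable {k V : Type*} [Field k] [AddCommGroup V] [Module k V] [FiniteDimensional k V]

lemma aux_key (hchar : (2 : k) ≠ 0) (hdim : Module.finrank k V ≤ 4)
    (Q : QuadraticForm k V) (y : CliffordAlgebra Q) (hy : y ∈ evenOdd Q 1)
    (hrev : reverse (Q := Q) y = y) : y ∈ LinearMap.range (ι Q) := by
  haveI : Invertible (2 : k) := invertibleOfNonzero hchar
  set B : LinearMap.BilinForm k V := QuadraticMap.associated (R := k) (-Q) with hBdef
  have h : B.toQuadraticMap = (0 : QuadraticForm k V) - Q :=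
    changeForm.associated_neg_proof
  have hB : ∀ a b, B a b = B b a := fun a b => QuadraticMap.associated_isSymm k (-Q) a b
  set z := changeForm h y with hz
  have hz1 : z ∈ evenOdd (0 : QuadraticForm k V) 1 := aux_changeForm_odd h y hy
  have hz2 : reverse z = z := by rw [hz, ← aux_changeForm_reverse h hB, hrev]
  have hz3 := aux_odd_le hdim hz1
  obtain ⟨a, ha, b, hb, hab⟩ := Submodule.mem_sup.mp hz3
  obtain ⟨v, rfl⟩ := ha
  have h1 : ι (0 : QuadraticForm k V) v + b = ι (0 : QuadraticForm k V) v + -b := by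
    conv_lhs => rw [hab, ← hz2, ← hab]
    rw [map_add, reverse_ι, aux_rev3 b hb]
  have h2 : b = -b := add_left_cancel h1
  have h3 : (2 : k) • b = 0 := by rw [two_smul]; exact eq_neg_iff_add_eq_zero.mp h2
  have hb0 : b = 0 := (smul_eq_zero.mp h3).resolve_left hchar
  have hy2 : changeForm (changeForm.neg_proof h) z = y := by
    have h4 := (changeFormEquiv h).symm_apply_apply y
    rwa [changeFormEquiv_symm, changeFormEquiv_apply, changeFormEquiv_apply] at h4
  rw [hb0, add_zero] at hab
  rw [← hy2, ← hab, changeForm_ι]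
  exact LinearMap.mem_range_self _ v

end Key
/-- For a nondegenerate quadratic space of dimension `≤ 4` over a field of characteristic
`≠ 2`, any even element `x` whose Clifford norm `xᵗ x` is a nonzero scalar `c` is
invertible with inverse `c⁻¹ xᵗ`, and conjugation by `x` preserves `ι(V)`; hence
`GSpin_V = {x ∈ C_V⁰ : N(x) ∈ k^×}`. -/
theorem even_clifford_norm_unit_in_clifford_group {k V : Type*} [Field k] [AddCommGroup V]
    [Module k V] [FiniteDimensional k V]
    (hchar : (2 : k) ≠ 0)
    (hdim : Module.finrank k V ≤ 4)
    (Q : QuadraticForm k V)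
    (hnd : (QuadraticMap.polarBilin Q).Nondegenerate)
    (x : CliffordAlgebra Q) (hx : x ∈ CliffordAlgebra.even Q)
    (c : k) (hc : c ≠ 0)
    (hN : CliffordAlgebra.reverse (Q := Q) x * x = algebraMap k (CliffordAlgebra Q) c) :
    x * (c⁻¹ • CliffordAlgebra.reverse (Q := Q) x) = 1 ∧
    (c⁻¹ • CliffordAlgebra.reverse (Q := Q) x) * x = 1 ∧
    (fun m => x * m * (c⁻¹ • CliffordAlgebra.reverse (Q := Q) x)) ''
        Set.range (CliffordAlgebra.ι Q)
      = Set.range (CliffordAlgebra.ι Q) := by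
  classical
  haveI : FiniteDimensional k (CliffordAlgebra Q) := aux_fd_clifford hchar Q
  set x' : CliffordAlgebra Q := c⁻¹ • reverse (Q := Q) x with hx'
  have h2 : x' * x = 1 := by
    rw [hx', smul_mul_assoc, hN, Algebra.smul_def, ← map_mul, inv_mul_cancel₀ hc, map_one]
  have hinj : Function.Injective (LinearMap.mulLeft k x) := by
    intro a b hab
    simp only [LinearMap.mulLeft_apply] at hab
    have hab2 : x' * (x * a) = x' * (x * b) := by rw [hab]
    rwa [← mul_assoc, ← mul_assoc, h2, one_mul, one_mul] at hab2
  obtain ⟨y, hy⟩ := (LinearMap.injective_iff_surjective.mp hinj) 1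
  have hxy : x * y = 1 := hy
  have h1 : x * x' = 1 := by
    have hx'y : x' = y := by
      calc x' = x' * (x * y) := by rw [hxy, mul_one]
        _ = (x' * x) * y := by rw [mul_assoc]
        _ = y := by rw [h2, one_mul]
    rw [hx'y]; exact hxy
  refine ⟨h1, h2, ?_⟩
  have hx0 : x ∈ evenOdd Q 0 := by rw [← even_toSubmodule]; exact hx
  have hx'0 : x' ∈ evenOdd Q 0 :=
    Submodule.smul_mem _ _ ((reverse_mem_evenOdd_iff (Q := Q)).mpr hx0)
  have hff : ∀ u w : CliffordAlgebra Q, u * w = 1 → w * u = 1 →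
      ((LinearMap.mulRight k w).comp (LinearMap.mulLeft k u)).comp
        ((LinearMap.mulRight k u).comp (LinearMap.mulLeft k w)) = LinearMap.id := by
    intro u w huw hwu
    ext m
    simp only [LinearMap.comp_apply, LinearMap.mulLeft_apply, LinearMap.mulRight_apply,
      LinearMap.id_coe, id_eq]
    simp only [mul_assoc]
    rw [huw, mul_one, ← mul_assoc, huw, one_mul]
  set g : CliffordAlgebra Q ≃ₗ[k] CliffordAlgebra Q :=
    LinearEquiv.ofLinear ((LinearMap.mulRight k x').comp (LinearMap.mulLeft k x))
      ((LinearMap.mulRight k x).comp (LinearMap.mulLeft k x'))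
      (hff x x' h1 h2) (hff x' x h2 h1) with hg
  have hgapp : ∀ m : CliffordAlgebra Q, g m = x * m * x' := by
    intro m
    simp only [hg, LinearEquiv.ofLinear_apply, LinearMap.comp_apply, LinearMap.mulLeft_apply,
      LinearMap.mulRight_apply]
  have hgmem : ∀ v : V, g (ι Q v) ∈ LinearMap.range (ι Q) := by
    intro v
    rw [hgapp]
    have hmem : x * ι Q v * x' ∈ evenOdd Q 1 := by
      have hm := SetLike.mul_mem_graded (SetLike.mul_mem_graded hx0 (ι_mem_evenOdd_one Q v)) hx'0
      rwa [show ((0 : ZMod 2) + 1 + 0 : ZMod 2) = 1 by decide] at hm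
    have hrev : reverse (x * ι Q v * x') = x * ι Q v * x' := by
      rw [hx', mul_smul_comm, map_smul, reverse.map_mul, reverse.map_mul, reverse_ι,
        reverse_reverse, mul_assoc]
    exact aux_key hchar hdim Q _ hmem hrev
  have hle : Submodule.map (g : CliffordAlgebra Q →ₗ[k] CliffordAlgebra Q)
      (LinearMap.range (ι Q)) ≤ LinearMap.range (ι Q) := by
    rintro _ ⟨w, hw, rfl⟩
    obtain ⟨v, rfl⟩ := hw
    exact hgmem v
  have heq : Submodule.map (g : CliffordAlgebra Q →ₗ[k] CliffordAlgebra Q)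
      (LinearMap.range (ι Q)) = LinearMap.range (ι Q) :=
    Submodule.eq_of_le_of_finrank_le hle (LinearEquiv.finrank_map_eq g _).ge
  have himg : (fun m => x * m * x') '' Set.range (ι Q)
      = (Submodule.map (g : CliffordAlgebra Q →ₗ[k] CliffordAlgebra Q)
          (LinearMap.range (ι Q)) : Set (CliffordAlgebra Q)) := by
    rw [Submodule.map_coe, LinearMap.coe_range]
    exact Set.image_congr' (fun m => (hgapp m).symm)
  rw [himg, heq, LinearMap.coe_range]
end

section
/- Let R be a commutative ring and (V,Q) a quadratic module over R. Let u, v ∈ V with Q(u) = 0 and B(u,v) = 0, and define the Eichler element E_{u,v} : V → V by E_{u,v}(y) = y + B(y,u)·v − B(y,v)·u − B(y,u)·Q(v)·u. Then: (1) Q(E_{u,v}(y)) = Q(y) for all y ∈ V (E_{u,v} is an isometry); (2) E_{u,v}(u) = u; (3) E_{u,v}(v) = v − 2Q(v)·u; and (4) E_{u,v₁} ∘ E_{u,v₂} = E_{u, v₁+v₂} whenever v₁, v₂ ∈ V satisfy B(u,v₁) = B(u,v₂) = 0. -/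
/-- The Eichler element `E_{u,v}(y) = y + B(y,u)v − B(y,v)u − B(y,u)Q(v)u` associated to
an isotropic vector `u` and a vector `v` orthogonal to `u`. -/
def eichlerElement {R V : Type*} [CommRing R] [AddCommGroup V] [Module R V]
    (Q : QuadraticForm R V) (u v : V) (y : V) : V :=
  y + QuadraticMap.polar Q y u • v - QuadraticMap.polar Q y v • u -
    (QuadraticMap.polar Q y u * Q v) • u

open QuadraticMap in
lemma eichler_eq {R V : Type*} [CommRing R] [AddCommGroup V] [Module R V]
    (Q : QuadraticForm R V) (u v : V) (y : V) :
    eichlerElement Q u v y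
      = (y + polar Q y u • v) + (-(polar Q y v + polar Q y u * Q v)) • u := by
  simp only [eichlerElement, neg_smul, add_smul]
  abel

/-- Properties of Eichler elements: `E_{u,v}` is an isometry, fixes `u`, sends `v` to
`v − 2Q(v)u`, and `E_{u,v₁} ∘ E_{u,v₂} = E_{u,v₁+v₂}` for `v₁, v₂ ⊥ u`. -/
theorem eichlerElement_properties {R V : Type*} [CommRing R] [AddCommGroup V] [Module R V]
    (Q : QuadraticForm R V) (u v : V)
    (hu : Q u = 0) (huv : QuadraticMap.polar Q u v = 0) :
    (∀ y : V, Q (eichlerElement Q u v y) = Q y) ∧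
    eichlerElement Q u v u = u ∧
    eichlerElement Q u v v = v - (2 * Q v) • u ∧
    (∀ v₁ v₂ : V, QuadraticMap.polar Q u v₁ = 0 → QuadraticMap.polar Q u v₂ = 0 →
      ∀ y : V, eichlerElement Q u v₁ (eichlerElement Q u v₂ y)
        = eichlerElement Q u (v₁ + v₂) y) := by
  open QuadraticMap in
  have hvu : polar Q v u = 0 := (polar_comm Q v u).trans huv
  have huu : polar Q u u = 0 := by simp [polar_self, hu]
  refine ⟨?_, ?_, ?_, ?_⟩
  · intro y
    rw [eichler_eq, QuadraticMap.map_add (⇑Q), QuadraticMap.map_add (⇑Q),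
      QuadraticMap.map_smul, QuadraticMap.map_smul,
      polar_smul_right, polar_smul_right, polar_add_left, polar_smul_left]
    simp only [hu, hvu, smul_eq_mul]
    ring
  · simp [eichlerElement, huu, huv]
  · simp only [eichlerElement, hvu, polar_self, zero_smul, add_zero, zero_mul, sub_zero,
      two_smul, two_mul, add_smul]
  · intro v₁ v₂ h1 h2 y
    have h1' : polar Q v₁ u = 0 := (polar_comm Q v₁ u).trans h1
    have h2' : polar Q v₂ u = 0 := (polar_comm Q v₂ u).trans h2
    simp only [eichlerElement, polar_add_left, polar_sub_left, polar_smul_left,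
      polar_add_right, QuadraticMap.map_add (⇑Q), h1, h2, h1', h2', huu, smul_eq_mul,
      polar_comm Q v₂ v₁]
    simp only [mul_zero, zero_mul, add_zero, sub_zero, zero_add, mul_add, add_smul, mul_smul,
      smul_add, smul_sub]
    module
end
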